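/- arXiv:2106.05318 — 6 statements merged into one kernel-verified Lean document; each statement's English description precedes it below -/
import Mathlib

section
/- Let X and U be real normed vector spaces. Let ψ₁, ψ₂ be class-K∞ functions, χ a class-K function, and W : ℝ≥0 → ℝ≥0 a continuous function with W(0) = 0 and W(r) > 0 for all r > 0. Then there exist a class-KL function β and a class-K function γ, depending only on ψ₁, ψ₂, χ, W, with the following property: for every continuous function x : ℝ≥0 → X, every function u : ℝ≥0 → U with bounded norm, and every continuous function V : ℝ≥0 → ℝ≥0 such that (i) ψ₁(‖x(t)‖) ≤ V(t) ≤ ψ₂(‖x(t)‖) for all t ≥ 0, and (ii) for every t ≥ 0 with ‖x(t)‖ ≥ χ(‖u(t)‖) the upper right Dini derivative of V satisfies D⁺V(t) ≤ −W(‖x(t)‖), one has ‖x(t)‖ ≤ β(‖x(0)‖, t) + γ(sup_{0 ≤ s ≤ t} ‖u(s)‖) for all t ≥ 0. (This is the trajectory-wise form of the theorem that existence of an ISS-Lyapunov function implies input-to-state stability.) -/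
open Filter Set
open scoped NNReal
open scoped Topology

/-- A class-K function: continuous, strictly increasing, vanishing at 0. -/
def ClassK (γ : ℝ≥0 → ℝ≥0) : Prop :=
  Continuous γ ∧ StrictMono γ ∧ γ 0 = 0

/-- A class-K∞ function: class K and unbounded. -/
def ClassKInf (γ : ℝ≥0 → ℝ≥0) : Prop :=
  ClassK γ ∧ Tendsto γ atTop atTop

/-- A class-KL function. -/
def ClassKL (β : ℝ≥0 → ℝ≥0 → ℝ≥0) : Prop :=
  (∀ t : ℝ≥0, ClassK (fun r => β r t)) ∧
  (∀ r : ℝ≥0, 0 < r →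
    Continuous (fun t => β r t) ∧ StrictAnti (fun t => β r t) ∧
      Tendsto (fun t => β r t) atTop (nhds 0))

/-- The upper right Dini derivative of `V` at `t`, valued in `EReal`. -/
noncomputable def diniDeriv (V : ℝ≥0 → ℝ≥0) (t : ℝ≥0) : EReal :=
  Filter.limsup (fun Δ : ℝ≥0 => (((V (t + Δ) : ℝ) - (V t : ℝ)) / (Δ : ℝ) : EReal))
    (nhdsWithin 0 (Set.Ioi 0))


/-- A class K∞ function is surjective. -/
theorem ClassKInf.surjective {ψ : ℝ≥0 → ℝ≥0} (h : ClassKInf ψ) : Function.Surjective ψ := by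
  intro y
  obtain ⟨R, hR⟩ : ∃ R, y ≤ ψ R := (h.2.eventually (eventually_ge_atTop y)).exists
  have : y ∈ Set.Icc (ψ 0) (ψ R) := by rw [h.1.2.2]; exact ⟨(zero_le : (0:ℝ≥0) ≤ y), hR⟩
  obtain ⟨r, _, hr⟩ := intermediate_value_Icc (zero_le : (0:ℝ≥0) ≤ R) h.1.1.continuousOn this
  exact ⟨r, hr⟩

/-- The order isomorphism induced by a class K∞ function. -/
noncomputable def ClassKInf.orderIso {ψ : ℝ≥0 → ℝ≥0} (h : ClassKInf ψ) : ℝ≥0 ≃o ℝ≥0 :=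
  StrictMono.orderIsoOfSurjective ψ h.1.2.1 h.surjective

theorem ClassKInf.orderIso_apply {ψ : ℝ≥0 → ℝ≥0} (h : ClassKInf ψ) (r : ℝ≥0) :
    h.orderIso r = ψ r := rfl

theorem OrderIso.nnreal_zero (e : ℝ≥0 ≃o ℝ≥0) : e 0 = 0 := by
  have := e.map_bot; simpa [bot_eq_zero'] using this

theorem OrderIso.nnreal_symm_zero (e : ℝ≥0 ≃o ℝ≥0) : e.symm 0 = 0 :=
  e.symm.nnreal_zero

theorem OrderIso.nnreal_pos (e : ℝ≥0 ≃o ℝ≥0) {v : ℝ≥0} (hv : 0 < v) : 0 < e v := by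
  have := e.strictMono hv; rwa [e.nnreal_zero] at this

theorem ClassKInf.symm_zero {ψ : ℝ≥0 → ℝ≥0} (h : ClassKInf ψ) : h.orderIso.symm 0 = 0 := by
  have := h.1.2.2
  conv_lhs => rw [← this, ← h.orderIso_apply, OrderIso.symm_apply_apply]

section Construction

variable (e₁ e₂ : ℝ≥0 ≃o ℝ≥0) (W : ℝ≥0 → ℝ≥0)

/-- Lower bound for `W` along level sets of `V`. -/
noncomputable def wfun (v : ℝ≥0) : ℝ≥0 :=
  sInf (insert v (W '' Icc (e₂.symm v) (e₁.symm v)))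

theorem wfun_le {v r : ℝ≥0} (h₂ : e₂.symm v ≤ r) (h₁ : r ≤ e₁.symm v) :
    wfun e₁ e₂ W v ≤ W r :=
  csInf_le (OrderBot.bddBelow _) (Set.mem_insert_of_mem _ ⟨r, ⟨h₂, h₁⟩, rfl⟩)

theorem wfun_le_self (v : ℝ≥0) : wfun e₁ e₂ W v ≤ v :=
  csInf_le (OrderBot.bddBelow _) (Set.mem_insert _ _)

/-- A uniform positive lower bound for `wfun` on an interval `[a, b]`, `0 < a`. -/
theorem wfun_lower_bound (hWc : Continuous W) (hWpos : ∀ r, 0 < r → 0 < W r)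
    {a b : ℝ≥0} (ha : 0 < a) :
    ∃ c : ℝ≥0, 0 < c ∧ ∀ s ∈ Icc a b, c ≤ wfun e₁ e₂ W s := by
  by_cases hJ : (Icc (e₂.symm a) (e₁.symm b)).Nonempty
  · obtain ⟨r₀, hr₀, hmin⟩ := (isCompact_Icc).exists_isMinOn hJ hWc.continuousOn
    have hr₀pos : 0 < r₀ := lt_of_lt_of_le (e₂.symm.nnreal_pos ha) hr₀.1
    refine ⟨min a (W r₀), lt_min ha (hWpos _ hr₀pos), ?_⟩
    intro s hs
    apply le_csInf ⟨s, Set.mem_insert _ _⟩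
    rintro x hx
    rcases Set.mem_insert_iff.1 hx with rfl | ⟨r, hr, rfl⟩
    · exact le_trans (min_le_left _ _) hs.1
    · refine le_trans (min_le_right _ _) (hmin ?_)
      exact ⟨le_trans (e₂.symm.monotone hs.1) hr.1, le_trans hr.2 (e₁.symm.monotone hs.2)⟩
  · refine ⟨a, ha, fun s hs => ?_⟩
    have hsub : Icc (e₂.symm s) (e₁.symm s) ⊆ Icc (e₂.symm a) (e₁.symm b) :=
      Set.Icc_subset_Icc (e₂.symm.monotone hs.1) (e₁.symm.monotone hs.2)
    rw [Set.not_nonempty_iff_eq_empty] at hJ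
    rw [hJ] at hsub
    have hempty : Icc (e₂.symm s) (e₁.symm s) = ∅ := Set.eq_empty_of_subset_empty hsub
    rw [wfun, hempty, Set.image_empty, insert_empty_eq, csInf_singleton]
    exact hs.1
  

/-- Continuous positive minorant of `wfun` (infimal convolution with `dist`). -/
noncomputable def whatt (v : ℝ≥0) : ℝ :=
  ⨅ s : ℝ≥0, ((wfun e₁ e₂ W s : ℝ) + dist v s)

theorem whatt_bddBelow (v : ℝ≥0) :
    BddBelow (Set.range fun s : ℝ≥0 => ((wfun e₁ e₂ W s : ℝ) + dist v s)) :=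
  ⟨0, by rintro x ⟨s, rfl⟩; positivity⟩

theorem whatt_nonneg (v : ℝ≥0) : 0 ≤ whatt e₁ e₂ W v :=
  le_ciInf fun s => by positivity

theorem whatt_le_wfun (v : ℝ≥0) : whatt e₁ e₂ W v ≤ (wfun e₁ e₂ W v : ℝ) := by
  have := ciInf_le (whatt_bddBelow e₁ e₂ W v) v
  simp only [dist_self, add_zero] at this; exact this

theorem whatt_le_add (u v : ℝ≥0) :
    whatt e₁ e₂ W v ≤ whatt e₁ e₂ W u + dist u v := by
  rw [← sub_le_iff_le_add]
  apply le_ciInf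
  intro s
  rw [sub_le_iff_le_add]
  calc whatt e₁ e₂ W v ≤ (wfun e₁ e₂ W s : ℝ) + dist v s :=
        ciInf_le (whatt_bddBelow e₁ e₂ W v) s
    _ ≤ (wfun e₁ e₂ W s : ℝ) + (dist u s + dist u v) := by
        have := dist_triangle v u s
        rw [dist_comm v u] at this
        linarith [this]
    _ = (wfun e₁ e₂ W s : ℝ) + dist u s + dist u v := by ring

theorem whatt_continuous : Continuous (whatt e₁ e₂ W) := by
  have : LipschitzWith 1 (whatt e₁ e₂ W) := by
    apply LipschitzWith.of_dist_le_mul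
    intro u v
    rw [Real.dist_eq, NNReal.coe_one, one_mul, abs_sub_le_iff]
    constructor
    · have := whatt_le_add e₁ e₂ W v u
      rw [dist_comm] at this; linarith
    · have := whatt_le_add e₁ e₂ W u v
      linarith
  exact this.continuous

theorem whatt_pos (hWc : Continuous W) (hWpos : ∀ r, 0 < r → 0 < W r)
    {v : ℝ≥0} (hv : 0 < v) : 0 < whatt e₁ e₂ W v := by
  obtain ⟨c, hc, hcle⟩ := wfun_lower_bound e₁ e₂ W hWc hWpos (half_pos hv) (b := 2 * v)
  have hvR : (0:ℝ) < v := hv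
  refine lt_of_lt_of_le (lt_min (by positivity : (0:ℝ) < (v:ℝ)/2) (by exact_mod_cast hc)) ?_
  apply le_ciInf
  intro s
  rcases le_or_gt (dist v s) ((v:ℝ)/2) with hd | hd
  · -- s is in [v/2, 2v]
    have hs1 : (v:ℝ)/2 ≤ (s:ℝ) := by
      have := abs_sub_le_iff.1 (by rwa [NNReal.dist_eq] at hd)
      linarith [this.1]
    have hs2 : (s:ℝ) ≤ 2 * v := by
      have := abs_sub_le_iff.1 (by rwa [NNReal.dist_eq] at hd)
      linarith [this.2]
    have hsmem : s ∈ Icc (v / 2) (2 * v) := by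
      constructor
      · rw [← NNReal.coe_le_coe]; push_cast; linarith
      · rw [← NNReal.coe_le_coe]; push_cast; linarith
    calc min ((v:ℝ)/2) (c:ℝ) ≤ (c:ℝ) := min_le_right _ _
      _ ≤ (wfun e₁ e₂ W s : ℝ) := by exact_mod_cast hcle s hsmem
      _ ≤ _ := le_add_of_nonneg_right dist_nonneg
  · calc min ((v:ℝ)/2) (c:ℝ) ≤ (v:ℝ)/2 := min_le_left _ _
      _ ≤ dist v s := hd.le
      _ ≤ _ := le_add_of_nonneg_left (by positivity)

/-- The integrand for the comparison function. -/
noncomputable def hfun (x : ℝ) : ℝ := 2 / x + 1 / whatt e₁ e₂ W x.toNNReal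

theorem hfun_pos {x : ℝ} (hx : 0 < x) : 0 < hfun e₁ e₂ W x := by
  have h1 : (0:ℝ) < 2 / x := by positivity
  have h2 : (0:ℝ) ≤ 1 / whatt e₁ e₂ W x.toNNReal :=
    one_div_nonneg.2 (whatt_nonneg e₁ e₂ W _)
  unfold hfun; linarith

theorem two_div_le_hfun {x : ℝ} (hx : 0 < x) : 2 / x ≤ hfun e₁ e₂ W x :=
  le_add_of_nonneg_right (one_div_nonneg.2 (whatt_nonneg e₁ e₂ W _))

theorem hfun_continuousAt (hWc : Continuous W) (hWpos : ∀ r, 0 < r → 0 < W r)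
    {x : ℝ} (hx : 0 < x) : ContinuousAt (hfun e₁ e₂ W) x := by
  apply ContinuousAt.add
  · exact (continuousAt_const.div continuousAt_id (ne_of_gt hx))
  · apply ContinuousAt.div continuousAt_const
    · exact ((whatt_continuous e₁ e₂ W).comp continuous_real_toNNReal).continuousAt
    · exact ne_of_gt (whatt_pos e₁ e₂ W hWc hWpos (Real.toNNReal_pos.2 hx))


/-- The rescaling function `L`. -/
noncomputable def Lfun (v : ℝ) : ℝ := ∫ y in (1:ℝ)..v, hfun e₁ e₂ W y

variable (hWc : Continuous W) (hWpos : ∀ r, 0 < r → 0 < W r)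
include hWc hWpos

theorem hfun_intble {a b : ℝ} (ha : 0 < a) (hb : 0 < b) :
    IntervalIntegrable (hfun e₁ e₂ W) MeasureTheory.volume a b := by
  apply ContinuousOn.intervalIntegrable
  intro y hy
  have hy0 : 0 < y := lt_of_lt_of_le (lt_min ha hb) hy.1
  exact (hfun_continuousAt e₁ e₂ W hWc hWpos hy0).continuousWithinAt

theorem Lfun_sub {u v : ℝ} (hu : 0 < u) (hv : 0 < v) :
    Lfun e₁ e₂ W v - Lfun e₁ e₂ W u = ∫ y in u..v, hfun e₁ e₂ W y := by
  have h1 := intervalIntegral.integral_add_adjacent_intervals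
    (hfun_intble e₁ e₂ W hWc hWpos one_pos hu) (hfun_intble e₁ e₂ W hWc hWpos hu hv)
  unfold Lfun
  linarith [h1]

theorem Lfun_strictMonoOn : StrictMonoOn (Lfun e₁ e₂ W) (Ioi 0) := by
  intro u hu v hv huv
  have := Lfun_sub e₁ e₂ W hWc hWpos (mem_Ioi.1 hu) (mem_Ioi.1 hv)
  have hpos : 0 < ∫ y in u..v, hfun e₁ e₂ W y := by
    apply intervalIntegral.intervalIntegral_pos_of_pos_on
      (hfun_intble e₁ e₂ W hWc hWpos (mem_Ioi.1 hu) (mem_Ioi.1 hv))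
    · intro y hy
      exact hfun_pos e₁ e₂ W (lt_trans (mem_Ioi.1 hu) hy.1)
    · exact huv
  linarith

theorem hasDerivAt_Lfun {v : ℝ} (hv : 0 < v) :
    HasDerivAt (Lfun e₁ e₂ W) (hfun e₁ e₂ W v) v := by
  apply intervalIntegral.integral_hasDerivAt_right
    (hfun_intble e₁ e₂ W hWc hWpos one_pos hv)
  · have : ∀ x ∈ Ioi (0:ℝ), ContinuousAt (hfun e₁ e₂ W) x := fun x hx =>
      hfun_continuousAt e₁ e₂ W hWc hWpos hx
    exact ContinuousAt.stronglyMeasurableAtFilter isOpen_Ioi this v hv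
  · exact hfun_continuousAt e₁ e₂ W hWc hWpos hv

theorem Lfun_continuousAt {v : ℝ} (hv : 0 < v) : ContinuousAt (Lfun e₁ e₂ W) v :=
  (hasDerivAt_Lfun e₁ e₂ W hWc hWpos hv).continuousAt

omit hWc hWpos in
theorem Lfun_one : Lfun e₁ e₂ W 1 = 0 := by
  simp [Lfun]

theorem Lfun_le_log {u : ℝ} (hu : 0 < u) (hu1 : u ≤ 1) :
    Lfun e₁ e₂ W u ≤ 2 * Real.log u := by
  have key : ∫ y in u..(1:ℝ), (2 / y) ≤ ∫ y in u..(1:ℝ), hfun e₁ e₂ W y := by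
    apply intervalIntegral.integral_mono_on hu1
    · apply ContinuousOn.intervalIntegrable
      intro y hy
      rw [uIcc_of_le hu1] at hy
      exact (continuousAt_const.div continuousAt_id
        (ne_of_gt (lt_of_lt_of_le hu hy.1))).continuousWithinAt
    · exact hfun_intble e₁ e₂ W hWc hWpos hu one_pos
    · intro y hy
      exact two_div_le_hfun e₁ e₂ W (lt_of_lt_of_le hu hy.1)
  have hlog : ∫ y in u..(1:ℝ), (2 / y) = -(2 * Real.log u) := by
    have h0 : (0:ℝ) ∉ uIcc u 1 := by
      rw [uIcc_of_le hu1]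
      intro h
      exact absurd h.1 (not_le.2 hu)
    have : ∫ y in u..(1:ℝ), (2 / y) = 2 * ∫ y in u..(1:ℝ), (1 / y) := by
      rw [← intervalIntegral.integral_const_mul]
      congr 1; ext y; ring
    rw [this, integral_one_div h0, one_div, Real.log_inv]
    ring
  have hsub := Lfun_sub e₁ e₂ W hWc hWpos hu one_pos
  rw [Lfun_one] at hsub
  linarith

theorem Lfun_ge_log {v : ℝ} (hv : 1 ≤ v) :
    2 * Real.log v ≤ Lfun e₁ e₂ W v := by
  have key : ∫ y in (1:ℝ)..v, (2 / y) ≤ ∫ y in (1:ℝ)..v, hfun e₁ e₂ W y := by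
    apply intervalIntegral.integral_mono_on hv
    · apply ContinuousOn.intervalIntegrable
      intro y hy
      rw [uIcc_of_le hv] at hy
      exact (continuousAt_const.div continuousAt_id
        (ne_of_gt (lt_of_lt_of_le one_pos hy.1))).continuousWithinAt
    · exact hfun_intble e₁ e₂ W hWc hWpos one_pos (lt_of_lt_of_le one_pos hv)
    · intro y hy
      exact two_div_le_hfun e₁ e₂ W (lt_of_lt_of_le one_pos hy.1)
  have hlog : ∫ y in (1:ℝ)..v, (2 / y) = 2 * Real.log v := by
    have h0 : (0:ℝ) ∉ uIcc 1 v := by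
      rw [uIcc_of_le hv]
      intro h
      linarith [h.1]
    have : ∫ y in (1:ℝ)..v, (2 / y) = 2 * ∫ y in (1:ℝ)..v, (1 / y) := by
      rw [← intervalIntegral.integral_const_mul]
      congr 1; ext y; ring
    rw [this, integral_one_div h0]
    simp
  unfold Lfun
  linarith

theorem exists_Lfun_le (y : ℝ) : ∃ u : ℝ, 0 < u ∧ Lfun e₁ e₂ W u ≤ y := by
  rcases le_or_gt y 0 with hy | hy
  · refine ⟨Real.exp (y / 2), Real.exp_pos _, ?_⟩
    have h1 : Real.exp (y / 2) ≤ 1 := Real.exp_le_one_iff.2 (by linarith)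
    calc Lfun e₁ e₂ W _ ≤ 2 * Real.log (Real.exp (y/2)) :=
          Lfun_le_log e₁ e₂ W hWc hWpos (Real.exp_pos _) h1
      _ = y := by rw [Real.log_exp]; ring
  · exact ⟨1, one_pos, by rw [Lfun_one]; linarith⟩

theorem exists_le_Lfun (y : ℝ) : ∃ v : ℝ, 0 < v ∧ y ≤ Lfun e₁ e₂ W v := by
  rcases le_or_gt y 0 with hy | hy
  · exact ⟨1, one_pos, by rw [Lfun_one]; linarith⟩
  · refine ⟨Real.exp (y / 2), Real.exp_pos _, ?_⟩
    have h1 : (1:ℝ) ≤ Real.exp (y / 2) := Real.one_le_exp_iff.2 (by linarith)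
    calc y = 2 * Real.log (Real.exp (y/2)) := by rw [Real.log_exp]; ring
      _ ≤ Lfun e₁ e₂ W _ := Lfun_ge_log e₁ e₂ W hWc hWpos h1


omit hWc hWpos in
/-- Inverse of `Lfun` as a function `ℝ → (0, ∞)`. -/
noncomputable def LInv (y : ℝ) : ℝ := sSup {x : ℝ | 0 < x ∧ Lfun e₁ e₂ W x ≤ y}

theorem LInv_spec (y : ℝ) : 0 < LInv e₁ e₂ W y ∧ Lfun e₁ e₂ W (LInv e₁ e₂ W y) = y := by
  obtain ⟨u, hu, hLu⟩ := exists_Lfun_le e₁ e₂ W hWc hWpos y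
  obtain ⟨v0, hv0, hLv0⟩ := exists_le_Lfun e₁ e₂ W hWc hWpos (y + 1)
  set S := {x : ℝ | 0 < x ∧ Lfun e₁ e₂ W x ≤ y} with hS
  have hne : u ∈ S := ⟨hu, hLu⟩
  have hbdd : BddAbove S := by
    refine ⟨v0, fun x hx => ?_⟩
    by_contra hlt
    push_neg at hlt
    have := Lfun_strictMonoOn e₁ e₂ W hWc hWpos (mem_Ioi.2 hv0) (mem_Ioi.2 hx.1) hlt
    linarith [hx.2]
  have hcpos : 0 < LInv e₁ e₂ W y := lt_of_lt_of_le hu (le_csSup hbdd hne)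
  set c := LInv e₁ e₂ W y with hc
  refine ⟨hcpos, ?_⟩
  rcases lt_trichotomy (Lfun e₁ e₂ W c) y with hlt | heq | hgt
  · exfalso
    obtain ⟨δ, hδ, hball⟩ := Metric.eventually_nhds_iff.1
      (((Lfun_continuousAt e₁ e₂ W hWc hWpos hcpos).eventually_lt continuousAt_const hlt))
    have hx : c + δ/2 ∈ S := by
      refine ⟨by linarith, le_of_lt (hball ?_)⟩
      rw [Real.dist_eq]
      rw [abs_of_pos (by linarith : (0:ℝ) < c + δ/2 - c)]
      linarith
    have := le_csSup hbdd hx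
    rw [show sSup S = c from rfl] at this
    linarith
  · exact heq
  · exfalso
    obtain ⟨δ, hδ, hball⟩ := Metric.eventually_nhds_iff.1
      ((continuousAt_const.eventually_lt (Lfun_continuousAt e₁ e₂ W hWc hWpos hcpos) hgt))
    have hub : ∀ x ∈ S, x ≤ c - δ/2 := by
      intro x hx
      by_contra hxgt
      push_neg at hxgt
      have hxle : x ≤ c := le_csSup hbdd hx
      have : y < Lfun e₁ e₂ W x := by
        apply hball
        rw [Real.dist_eq, abs_lt]; constructor <;> linarith
      linarith [hx.2]
    have := csSup_le ⟨u, hne⟩ hub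
    rw [show sSup S = c from rfl] at this
    linarith

theorem LInv_pos (y : ℝ) : 0 < LInv e₁ e₂ W y := (LInv_spec e₁ e₂ W hWc hWpos y).1

theorem Lfun_LInv (y : ℝ) : Lfun e₁ e₂ W (LInv e₁ e₂ W y) = y :=
  (LInv_spec e₁ e₂ W hWc hWpos y).2

theorem LInv_Lfun {v : ℝ} (hv : 0 < v) : LInv e₁ e₂ W (Lfun e₁ e₂ W v) = v := by
  apply (Lfun_strictMonoOn e₁ e₂ W hWc hWpos).injOn
    (mem_Ioi.2 (LInv_pos e₁ e₂ W hWc hWpos _)) (mem_Ioi.2 hv)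
  exact Lfun_LInv e₁ e₂ W hWc hWpos _

theorem LInv_strictMono : StrictMono (LInv e₁ e₂ W) := by
  intro y y' h
  by_contra hle
  push_neg at hle
  have := (Lfun_strictMonoOn e₁ e₂ W hWc hWpos).monotoneOn
    (mem_Ioi.2 (LInv_pos e₁ e₂ W hWc hWpos y')) (mem_Ioi.2 (LInv_pos e₁ e₂ W hWc hWpos y)) hle
  rw [Lfun_LInv e₁ e₂ W hWc hWpos, Lfun_LInv e₁ e₂ W hWc hWpos] at this
  linarith

theorem LInv_lt_iff {y b : ℝ} (hb : 0 < b) :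
    LInv e₁ e₂ W y < b ↔ y < Lfun e₁ e₂ W b := by
  constructor
  · intro h
    have := Lfun_strictMonoOn e₁ e₂ W hWc hWpos
      (mem_Ioi.2 (LInv_pos e₁ e₂ W hWc hWpos y)) (mem_Ioi.2 hb) h
    rwa [Lfun_LInv e₁ e₂ W hWc hWpos] at this
  · intro h
    have := LInv_strictMono e₁ e₂ W hWc hWpos h
    rwa [LInv_Lfun e₁ e₂ W hWc hWpos hb] at this

theorem lt_LInv_iff {y a : ℝ} (ha : 0 < a) :
    a < LInv e₁ e₂ W y ↔ Lfun e₁ e₂ W a < y := by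
  constructor
  · intro h
    have := Lfun_strictMonoOn e₁ e₂ W hWc hWpos
      (mem_Ioi.2 ha) (mem_Ioi.2 (LInv_pos e₁ e₂ W hWc hWpos y)) h
    rwa [Lfun_LInv e₁ e₂ W hWc hWpos] at this
  · intro h
    have := LInv_strictMono e₁ e₂ W hWc hWpos h
    rwa [LInv_Lfun e₁ e₂ W hWc hWpos ha] at this

theorem LInv_continuous : Continuous (LInv e₁ e₂ W) := by
  rw [continuous_iff_continuousAt]
  intro y
  rw [ContinuousAt, tendsto_order]
  constructor
  · intro a ha
    rcases le_or_gt a 0 with ha0 | ha0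
    · exact Eventually.of_forall fun z => lt_of_le_of_lt ha0 (LInv_pos e₁ e₂ W hWc hWpos z)
    · have hy : Lfun e₁ e₂ W a < y := (lt_LInv_iff e₁ e₂ W hWc hWpos ha0).1 ha
      filter_upwards [Ioi_mem_nhds hy] with z hz
      exact (lt_LInv_iff e₁ e₂ W hWc hWpos ha0).2 hz
  · intro b hb
    have hb0 : 0 < b := lt_trans (LInv_pos e₁ e₂ W hWc hWpos y) hb
    have hy : y < Lfun e₁ e₂ W b := (LInv_lt_iff e₁ e₂ W hWc hWpos hb0).1 hb
    filter_upwards [Iio_mem_nhds hy] with z hz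
    exact (LInv_lt_iff e₁ e₂ W hWc hWpos hb0).2 hz

theorem hasDerivAt_LInv (y : ℝ) :
    HasDerivAt (LInv e₁ e₂ W) (hfun e₁ e₂ W (LInv e₁ e₂ W y))⁻¹ y := by
  apply HasDerivAt.of_local_left_inverse
    ((LInv_continuous e₁ e₂ W hWc hWpos).continuousAt)
    (hasDerivAt_Lfun e₁ e₂ W hWc hWpos (LInv_pos e₁ e₂ W hWc hWpos y))
    (ne_of_gt (hfun_pos e₁ e₂ W (LInv_pos e₁ e₂ W hWc hWpos y)))
  exact Eventually.of_forall (Lfun_LInv e₁ e₂ W hWc hWpos)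


omit hWc hWpos in
/-- The prototype KL function. -/
noncomputable def betahat (v : ℝ≥0) (t : ℝ≥0) : ℝ≥0 :=
  if v = 0 then 0 else (LInv e₁ e₂ W (Lfun e₁ e₂ W (v:ℝ) - (t:ℝ))).toNNReal

omit hWc hWpos in
theorem betahat_zero (t : ℝ≥0) : betahat e₁ e₂ W 0 t = 0 := by
  simp [betahat]

theorem coe_betahat {v : ℝ≥0} (hv : v ≠ 0) (t : ℝ≥0) :
    (betahat e₁ e₂ W v t : ℝ) = LInv e₁ e₂ W (Lfun e₁ e₂ W (v:ℝ) - (t:ℝ)) := by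
  rw [betahat, if_neg hv]
  exact Real.coe_toNNReal _ (LInv_pos e₁ e₂ W hWc hWpos _).le

theorem betahat_pos (t : ℝ≥0) {v : ℝ≥0} (hv : 0 < v) : 0 < betahat e₁ e₂ W v t := by
  rw [betahat, if_neg hv.ne']
  exact Real.toNNReal_pos.2 (LInv_pos e₁ e₂ W hWc hWpos _)

theorem betahat_le_self (v t : ℝ≥0) : betahat e₁ e₂ W v t ≤ v := by
  rcases eq_or_ne v 0 with rfl | hv
  · rw [betahat_zero]
  · rw [betahat, if_neg hv]
    have hvpos : (0:ℝ) < (v:ℝ) := by positivity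
    have h1 : LInv e₁ e₂ W (Lfun e₁ e₂ W (v:ℝ) - (t:ℝ)) ≤ LInv e₁ e₂ W (Lfun e₁ e₂ W (v:ℝ)) :=
      (LInv_strictMono e₁ e₂ W hWc hWpos).monotone (by
        have : (0:ℝ) ≤ (t:ℝ) := t.coe_nonneg
        linarith)
    rw [LInv_Lfun e₁ e₂ W hWc hWpos hvpos] at h1
    calc (LInv e₁ e₂ W (Lfun e₁ e₂ W (v:ℝ) - (t:ℝ))).toNNReal ≤ ((v:ℝ)).toNNReal :=
          Real.toNNReal_mono h1
      _ = v := Real.toNNReal_coe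

theorem betahat_strictMono (t : ℝ≥0) : StrictMono (fun v => betahat e₁ e₂ W v t) := by
  intro v v' hvv'
  rcases eq_or_ne v 0 with rfl | hv
  · simpa [betahat_zero] using betahat_pos e₁ e₂ W hWc hWpos t hvv'
  · have hvpos : (0:ℝ) < (v:ℝ) := by positivity
    have hv'pos : (0:ℝ) < (v':ℝ) := lt_trans hvpos (by exact_mod_cast hvv')
    simp only [betahat, if_neg hv, if_neg (lt_of_le_of_lt (zero_le : (0:ℝ≥0) ≤ v) hvv').ne']
    rw [Real.toNNReal_lt_toNNReal_iff (LInv_pos e₁ e₂ W hWc hWpos _)]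
    apply LInv_strictMono e₁ e₂ W hWc hWpos
    have := Lfun_strictMonoOn e₁ e₂ W hWc hWpos (mem_Ioi.2 hvpos) (mem_Ioi.2 hv'pos)
      (by exact_mod_cast hvv')
    linarith

theorem betahat_continuous_v (t : ℝ≥0) : Continuous (fun v => betahat e₁ e₂ W v t) := by
  rw [continuous_iff_continuousAt]
  intro v₀
  rcases eq_or_ne v₀ 0 with rfl | hv₀
  · rw [ContinuousAt, betahat_zero]
    apply tendsto_of_tendsto_of_tendsto_of_le_of_le tendsto_const_nhds
      (continuous_id.tendsto 0)
    · exact fun v => zero_le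
    · exact fun v => betahat_le_self e₁ e₂ W hWc hWpos v t
  · have hg : ContinuousAt
        (fun v : ℝ≥0 => (LInv e₁ e₂ W (Lfun e₁ e₂ W (v:ℝ) - (t:ℝ))).toNNReal) v₀ := by
      apply continuous_real_toNNReal.continuousAt.comp
      apply ((LInv_continuous e₁ e₂ W hWc hWpos).continuousAt).comp
      apply ContinuousAt.sub _ continuousAt_const
      exact (Lfun_continuousAt e₁ e₂ W hWc hWpos (by positivity : (0:ℝ) < (v₀:ℝ))).comp
        NNReal.continuous_coe.continuousAt
    apply hg.congr
    filter_upwards [isOpen_ne.mem_nhds hv₀] with v hv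
    rw [betahat, if_neg hv]

theorem betahat_continuous_t {v : ℝ≥0} (hv : 0 < v) :
    Continuous (fun t : ℝ≥0 => betahat e₁ e₂ W v t) := by
  have : (fun t : ℝ≥0 => betahat e₁ e₂ W v t) =
      fun t : ℝ≥0 => (LInv e₁ e₂ W (Lfun e₁ e₂ W (v:ℝ) - (t:ℝ))).toNNReal := by
    funext t; rw [betahat, if_neg hv.ne']
  rw [this]
  exact continuous_real_toNNReal.comp ((LInv_continuous e₁ e₂ W hWc hWpos).comp
    (continuous_const.sub NNReal.continuous_coe))

theorem betahat_strictAnti {v : ℝ≥0} (hv : 0 < v) :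
    StrictAnti (fun t : ℝ≥0 => betahat e₁ e₂ W v t) := by
  intro t t' htt'
  simp only [betahat, if_neg hv.ne']
  rw [Real.toNNReal_lt_toNNReal_iff (LInv_pos e₁ e₂ W hWc hWpos _)]
  apply LInv_strictMono e₁ e₂ W hWc hWpos
  have : (t:ℝ) < (t':ℝ) := htt'
  linarith

theorem betahat_tendsto {v : ℝ≥0} (hv : 0 < v) :
    Tendsto (fun t : ℝ≥0 => betahat e₁ e₂ W v t) atTop (𝓝 0) := by
  have h1 : Tendsto (fun t : ℝ≥0 => Lfun e₁ e₂ W (v:ℝ) - (t:ℝ)) atTop atBot := by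
    apply Filter.tendsto_atBot_add_const_left
    exact (tendsto_neg_atTop_atBot).comp (NNReal.tendsto_coe_atTop.2 tendsto_id)
  have h2 : Tendsto (LInv e₁ e₂ W) atBot (𝓝 0) := by
    rw [tendsto_order]
    constructor
    · intro a ha
      exact Eventually.of_forall fun y => lt_trans ha (LInv_pos e₁ e₂ W hWc hWpos y)
    · intro b hb
      filter_upwards [eventually_lt_atBot (Lfun e₁ e₂ W b)] with y hy
      exact (LInv_lt_iff e₁ e₂ W hWc hWpos hb).2 hy
  have h3 : Tendsto (fun t : ℝ≥0 => LInv e₁ e₂ W (Lfun e₁ e₂ W (v:ℝ) - (t:ℝ)))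
      atTop (𝓝 0) := h2.comp h1
  have h4 := (continuous_real_toNNReal.tendsto 0).comp h3
  simp only [Real.toNNReal_zero] at h4
  have : (fun t : ℝ≥0 => betahat e₁ e₂ W v t) =
      fun t : ℝ≥0 => (LInv e₁ e₂ W (Lfun e₁ e₂ W (v:ℝ) - (t:ℝ))).toNNReal := by
    funext t; rw [betahat, if_neg hv.ne']
  rw [this]
  exact h4

theorem inv_hfun_lt_whatt {v : ℝ≥0} (hv : 0 < v) :
    (hfun e₁ e₂ W (v:ℝ))⁻¹ < whatt e₁ e₂ W v := by
  have hw : 0 < whatt e₁ e₂ W v := whatt_pos e₁ e₂ W hWc hWpos hv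
  have hvR : (0:ℝ) < (v:ℝ) := hv
  have h1 : 1 / whatt e₁ e₂ W v < hfun e₁ e₂ W (v:ℝ) := by
    unfold hfun
    rw [Real.toNNReal_coe]
    have : (0:ℝ) < 2 / (v:ℝ) := by positivity
    linarith
  have h2 : (0:ℝ) < 1 / whatt e₁ e₂ W v := by positivity
  calc (hfun e₁ e₂ W (v:ℝ))⁻¹ < (1 / whatt e₁ e₂ W v)⁻¹ :=
        inv_strictAnti₀ h2 h1
    _ = whatt e₁ e₂ W v := by rw [one_div, inv_inv]

end Construction

theorem dini_slope (V : ℝ≥0 → ℝ≥0) {xr : ℝ} (hx : 0 ≤ xr) {c : ℝ}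
    (hd : diniDeriv V xr.toNNReal ≤ (c : EReal)) :
    ∀ r : ℝ, c < r → ∃ᶠ z in 𝓝[>] xr,
      slope (fun s : ℝ => (V s.toNNReal : ℝ)) xr z < r := by
  intro r hr
  have hlt : diniDeriv V xr.toNNReal < (r : EReal) :=
    lt_of_le_of_lt hd (by exact_mod_cast hr)
  have hev : ∀ᶠ Δ in 𝓝[>] (0:ℝ≥0),
      ((((V (xr.toNNReal + Δ) : ℝ) - (V xr.toNNReal : ℝ)) / (Δ:ℝ) : ℝ) : EReal) < (r:EReal) :=
    eventually_lt_of_limsup_lt hlt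
  have hmap : Tendsto (fun z : ℝ => (z - xr).toNNReal) (𝓝[>] xr) (𝓝[>] (0:ℝ≥0)) := by
    rw [tendsto_nhdsWithin_iff]
    constructor
    · apply Tendsto.mono_left _ nhdsWithin_le_nhds
      have hc : Continuous fun z : ℝ => (z - xr).toNNReal :=
        continuous_real_toNNReal.comp (continuous_id.sub continuous_const)
      have h0 : (xr - xr).toNNReal = 0 := by simp
      simpa [h0] using hc.tendsto xr
    · filter_upwards [self_mem_nhdsWithin] with z hz
      exact Real.toNNReal_pos.2 (sub_pos.2 hz)
  apply Eventually.frequently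
  filter_upwards [hmap.eventually hev, self_mem_nhdsWithin] with z hz hz'
  have hzx : xr < z := hz'
  have hΔ : ((z - xr).toNNReal : ℝ) = z - xr := Real.coe_toNNReal _ (by linarith)
  have hadd : xr.toNNReal + (z - xr).toNNReal = z.toNNReal := by
    rw [← Real.toNNReal_add hx (by linarith : (0:ℝ) ≤ z - xr)]
    congr 1; ring
  rw [EReal.coe_lt_coe_iff] at hz
  rw [hadd, hΔ] at hz
  rw [slope_def_field]
  exact hz

section Trajectory

variable {X : Type*} {U : Type*} [NormedAddCommGroup X] [NormedAddCommGroup U]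
variable (e₁ e₂ : ℝ≥0 ≃o ℝ≥0) (W : ℝ≥0 → ℝ≥0) (χ : ℝ≥0 → ℝ≥0)
variable (hWc : Continuous W) (hWpos : ∀ r, 0 < r → 0 < W r)
variable (x : ℝ≥0 → X) (u : ℝ≥0 → U) (V : ℝ≥0 → ℝ≥0)
variable (hV : Continuous V)
variable (hsand : ∀ s : ℝ≥0, e₁ ‖x s‖₊ ≤ V s ∧ V s ≤ e₂ ‖x s‖₊)
variable (hdini : ∀ s : ℝ≥0, χ ‖u s‖₊ ≤ ‖x s‖₊ →
  diniDeriv V s ≤ ((-(W ‖x s‖₊ : ℝ) : ℝ) : EReal))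

include hWc hWpos hV hsand hdini

theorem traj_key (t : ℝ≥0) (bR : ℝ≥0) (hbR : ∀ s : ℝ≥0, s ≤ t → e₂ (χ ‖u s‖₊) ≤ bR)
    {ε ε' : ℝ} (hε : 0 < ε) (hε' : 0 < ε') :
    (V t : ℝ) ≤ max ((bR : ℝ) + ε')
      (LInv e₁ e₂ W (Lfun e₁ e₂ W ((V 0 : ℝ) + ε) - (t : ℝ))) := by
  set f : ℝ → ℝ := fun s => (V s.toNNReal : ℝ) with hfdef
  have hfc : Continuous f := NNReal.continuous_coe.comp (hV.comp continuous_real_toNNReal)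
  have hft : f (t:ℝ) = (V t:ℝ) := by simp [hfdef, Real.toNNReal_coe]
  have hf0 : f 0 = (V 0:ℝ) := by simp [hfdef]
  -- norm positivity where f is positive
  have hxpos : ∀ s : ℝ≥0, 0 < V s → 0 < ‖x s‖₊ := by
    intro s hVs
    by_contra h0
    push_neg at h0
    have : ‖x s‖₊ = 0 := le_antisymm h0 zero_le
    have hV2 := (hsand s).2
    rw [this, e₂.nnreal_zero] at hV2
    exact absurd (lt_of_lt_of_le hVs hV2) (lt_irrefl _)
  -- slope condition wherever f is above bR
  have hslope : ∀ s : ℝ, 0 ≤ s → s ≤ (t:ℝ) → (bR:ℝ) < f s →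
      ∀ r : ℝ, -((W ‖x s.toNNReal‖₊ : ℝ)) < r → ∃ᶠ z in 𝓝[>] s, slope f s z < r := by
    intro s hs0 hst hbRs
    have h1 : bR < V s.toNNReal := by exact_mod_cast hbRs
    have hstt : s.toNNReal ≤ t := Real.toNNReal_le_iff_le_coe.2 hst
    have h2 : e₂ (χ ‖u s.toNNReal‖₊) < e₂ ‖x s.toNNReal‖₊ :=
      lt_of_le_of_lt (hbR _ hstt) (lt_of_lt_of_le h1 (hsand _).2)
    have h3 : χ ‖u s.toNNReal‖₊ ≤ ‖x s.toNNReal‖₊ := (e₂.lt_iff_lt.1 h2).le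
    exact dini_slope V hs0 (hdini _ h3)
  -- decrease with constant barrier
  have hconstbar : ∀ a T : ℝ, 0 ≤ a → a ≤ T → T ≤ (t:ℝ) →
      (∀ s, s ∈ Icc a T → (bR:ℝ) < f s) → f T ≤ f a := by
    intro a T ha0 haT hTt habove
    have key := image_le_of_liminf_slope_right_lt_deriv_boundary'
      (f := f) (f' := fun s => -((W ‖x s.toNNReal‖₊ : ℝ))) (a := a) (b := T)
      (B := fun _ => f a) (B' := fun _ => 0)
      hfc.continuousOn
      (fun s hs r hr =>
        hslope s (le_trans ha0 hs.1) (le_trans hs.2.le hTt) (habove s ⟨hs.1, hs.2.le⟩) r hr)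
      le_rfl continuousOn_const
      (fun s _ => hasDerivWithinAt_const s _ (f a))
      ?_
    · exact key (right_mem_Icc.2 haT)
    · intro s hs hcontact
      have hfs : (bR:ℝ) < f s := habove s ⟨hs.1, hs.2.le⟩
      have hVs : 0 < V s.toNNReal := by
        have : (0:ℝ) ≤ (bR:ℝ) := bR.coe_nonneg
        exact_mod_cast lt_of_le_of_lt this hfs
      have h1 := hWpos _ (hxpos _ hVs)
      have h2 : (0:ℝ) < (W ‖x s.toNNReal‖₊ : ℝ) := h1
      show -((W ‖x s.toNNReal‖₊ : ℝ)) < 0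
      linarith
  -- decrease with the Lfun barrier
  set v₀ : ℝ := (V 0 : ℝ) + ε with hv₀def
  have hv₀ : 0 < v₀ := by positivity
  set Lc : ℝ := Lfun e₁ e₂ W v₀ with hLc
  set Bf : ℝ → ℝ := fun s => LInv e₁ e₂ W (Lc - s) with hBfdef
  have hBfpos : ∀ s, 0 < Bf s := fun s => LInv_pos e₁ e₂ W hWc hWpos _
  have hBf0 : Bf 0 = v₀ := by
    rw [hBfdef]
    simp only [sub_zero]
    exact LInv_Lfun e₁ e₂ W hWc hWpos hv₀
  have hBderiv : ∀ s : ℝ, HasDerivAt Bf (-(hfun e₁ e₂ W (Bf s))⁻¹) s := by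
    intro s
    have h1 : HasDerivAt (fun s : ℝ => Lc - s) (-1) s := by
      simpa using (hasDerivAt_id s).const_sub Lc
    have h2 := (hasDerivAt_LInv e₁ e₂ W hWc hWpos (Lc - s)).comp s h1
    rw [mul_neg_one] at h2; exact h2
  have hdecay : (∀ s, s ∈ Icc 0 (t:ℝ) → (bR:ℝ) < f s) → f (t:ℝ) ≤ Bf (t:ℝ) := by
    intro habove
    have key := image_le_of_liminf_slope_right_lt_deriv_boundary
      (f := f) (f' := fun s => -((W ‖x s.toNNReal‖₊ : ℝ))) (a := 0) (b := (t:ℝ))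
      (B := Bf) (B' := fun s => -(hfun e₁ e₂ W (Bf s))⁻¹)
      hfc.continuousOn
      (fun s hs r hr =>
        hslope s hs.1 hs.2.le (habove s ⟨hs.1, hs.2.le⟩) r hr)
      (by rw [hf0, hBf0, hv₀def]; linarith)
      (fun s => hBderiv s)
      ?_
    · exact key (right_mem_Icc.2 t.coe_nonneg)
    · intro s hs hcontact
      set v : ℝ≥0 := V s.toNNReal with hvdef
      have hfs : (bR:ℝ) < f s := habove s ⟨hs.1, hs.2.le⟩
      have hv : 0 < v := by
        have h0 : (0:ℝ) ≤ (bR:ℝ) := bR.coe_nonneg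
        exact_mod_cast lt_of_le_of_lt h0 hfs
      have hBv : Bf s = (v:ℝ) := hcontact.symm
      have hle1 : e₂.symm v ≤ ‖x s.toNNReal‖₊ := e₂.symm_apply_le.2 (hsand _).2
      have hle2 : ‖x s.toNNReal‖₊ ≤ e₁.symm v := e₁.le_symm_apply.2 (hsand _).1
      have hWge : whatt e₁ e₂ W v ≤ (W ‖x s.toNNReal‖₊ : ℝ) :=
        le_trans (whatt_le_wfun e₁ e₂ W v) (by exact_mod_cast wfun_le e₁ e₂ W hle1 hle2)
      have hstrict : (hfun e₁ e₂ W (v:ℝ))⁻¹ < (W ‖x s.toNNReal‖₊ : ℝ) :=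
        lt_of_lt_of_le (inv_hfun_lt_whatt e₁ e₂ W hWc hWpos hv) hWge
      show -((W ‖x s.toNNReal‖₊ : ℝ)) < -(hfun e₁ e₂ W (Bf s))⁻¹
      rw [hBv]
      linarith
  -- case split
  set b' : ℝ := (bR:ℝ) + ε' with hb'def
  have hbRb' : (bR:ℝ) < b' := by rw [hb'def]; linarith
  by_cases hex : ∃ s : ℝ, s ∈ Icc 0 (t:ℝ) ∧ f s ≤ b'
  · -- there is a time where f dips below b'
    set S : Set ℝ := {s | s ∈ Icc 0 (t:ℝ) ∧ f s ≤ b'} with hSdef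
    have hSclosed : IsClosed S := by
      have : S = Icc 0 (t:ℝ) ∩ f ⁻¹' Iic b' := by
        ext s; exact Iff.rfl
      rw [this]
      exact isClosed_Icc.inter (isClosed_Iic.preimage hfc)
    have hSne : S.Nonempty := hex
    have hSbdd : BddAbove S := BddAbove.mono (fun s hs => hs.1) bddAbove_Icc
    set s₁ : ℝ := sSup S with hs₁def
    have hs₁mem : s₁ ∈ S := hSclosed.csSup_mem hSne hSbdd
    rcases eq_or_lt_of_le hs₁mem.1.2 with heq | hlt
    · -- s₁ = t
      refine le_trans ?_ (le_max_left _ _)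
      rw [← hft, ← heq]
      exact hs₁mem.2
    · -- s₁ < t
      have hgt : ∀ s : ℝ, s₁ < s → s ≤ (t:ℝ) → b' < f s := by
        intro s hs1 hst
        by_contra hle
        push_neg at hle
        have hmem : s ∈ S := ⟨⟨le_trans hs₁mem.1.1 hs1.le, hst⟩, hle⟩
        exact absurd (le_csSup hSbdd hmem) (not_le.2 hs1)
      have hfTle : ∀ s' ∈ Ioo s₁ (t:ℝ), f (t:ℝ) ≤ f s' := by
        intro s' hs'
        exact hconstbar s' (t:ℝ) (le_trans hs₁mem.1.1 hs'.1.le) hs'.2.le le_rfl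
          (fun s hs => lt_trans hbRb' (hgt s (lt_of_lt_of_le hs'.1 hs.1) hs.2))
      have htends : Tendsto f (𝓝[>] s₁) (𝓝 (f s₁)) := hfc.continuousWithinAt
      have hev : ∀ᶠ s' in 𝓝[>] s₁, f (t:ℝ) ≤ f s' := by
        filter_upwards [Ioo_mem_nhdsGT_of_mem ⟨le_rfl, hlt⟩] with s' hs'
        exact hfTle s' hs'
      have := ge_of_tendsto htends hev
      refine le_trans ?_ (le_max_left _ _)
      rw [← hft]
      exact le_trans this hs₁mem.2
  · -- f stays above b' on [0, t]
    push_neg at hex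
    have habove : ∀ s, s ∈ Icc 0 (t:ℝ) → (bR:ℝ) < f s :=
      fun s hs => lt_trans hbRb' (hex s hs)
    refine le_trans ?_ (le_max_right _ _)
    rw [← hft]
    exact hdecay habove

end Trajectory


/-- Existence of an ISS-Lyapunov function implies input-to-state stability
(trajectory-wise form). -/
theorem iss_of_iss_lyapunov
    {X U : Type*} [NormedAddCommGroup X] [NormedSpace ℝ X]
    [NormedAddCommGroup U] [NormedSpace ℝ U]
    (ψ₁ ψ₂ : ℝ≥0 → ℝ≥0) (hψ₁ : ClassKInf ψ₁) (hψ₂ : ClassKInf ψ₂)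
    (χ : ℝ≥0 → ℝ≥0) (hχ : ClassK χ)
    (W : ℝ≥0 → ℝ≥0) (hWc : Continuous W) (hW0 : W 0 = 0)
    (hWpos : ∀ r : ℝ≥0, 0 < r → 0 < W r) :
    ∃ β : ℝ≥0 → ℝ≥0 → ℝ≥0, ∃ γ : ℝ≥0 → ℝ≥0, ClassKL β ∧ ClassK γ ∧
      ∀ (x : ℝ≥0 → X) (u : ℝ≥0 → U) (V : ℝ≥0 → ℝ≥0),
        Continuous x →
        (∃ M : ℝ, ∀ t : ℝ≥0, ‖u t‖ ≤ M) →
        Continuous V →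
        (∀ t : ℝ≥0, ψ₁ ‖x t‖₊ ≤ V t ∧ V t ≤ ψ₂ ‖x t‖₊) →
        (∀ t : ℝ≥0, χ ‖u t‖₊ ≤ ‖x t‖₊ →
          diniDeriv V t ≤ ((-(W ‖x t‖₊ : ℝ) : ℝ) : EReal)) →
        ∀ t : ℝ≥0, ‖x t‖₊ ≤ β ‖x 0‖₊ t + γ (⨆ s ∈ Set.Icc (0 : ℝ≥0) t, ‖u s‖₊) := by
  classical
  set e₁ := hψ₁.orderIso with he₁
  set e₂ := hψ₂.orderIso with he₂
  refine ⟨fun r t => e₁.symm (betahat e₁ e₂ W (e₂ r) t),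
          fun r => e₁.symm (e₂ (χ r)), ⟨?_, ?_⟩, ?_, ?_⟩
  · -- class K in first argument
    intro t
    refine ⟨?_, ?_, ?_⟩
    · exact e₁.symm.continuous.comp
        ((betahat_continuous_v e₁ e₂ W hWc hWpos t).comp e₂.continuous)
    · exact e₁.symm.strictMono.comp
        ((betahat_strictMono e₁ e₂ W hWc hWpos t).comp e₂.strictMono)
    · show e₁.symm (betahat e₁ e₂ W (e₂ 0) t) = 0
      rw [e₂.nnreal_zero, betahat_zero, OrderIso.nnreal_symm_zero]
  · -- KL in second argument
    intro r hr
    have hv : 0 < e₂ r := e₂.nnreal_pos hr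
    refine ⟨?_, ?_, ?_⟩
    · exact e₁.symm.continuous.comp (betahat_continuous_t e₁ e₂ W hWc hWpos hv)
    · exact e₁.symm.strictMono.comp_strictAnti (betahat_strictAnti e₁ e₂ W hWc hWpos hv)
    · have h1 := (e₁.symm.continuous.tendsto 0).comp (betahat_tendsto e₁ e₂ W hWc hWpos hv)
      rwa [Function.comp_def, OrderIso.nnreal_symm_zero] at h1
  · -- class K of γ
    refine ⟨?_, ?_, ?_⟩
    · exact e₁.symm.continuous.comp (e₂.continuous.comp hχ.1)
    · exact e₁.symm.strictMono.comp (e₂.strictMono.comp hχ.2.1)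
    · show e₁.symm (e₂ (χ 0)) = 0
      rw [hχ.2.2, e₂.nnreal_zero, OrderIso.nnreal_symm_zero]
  · -- the trajectory bound
    intro x u V hx hubdd hV hsand hdini t
    set usup : ℝ≥0 := ⨆ s ∈ Set.Icc (0 : ℝ≥0) t, ‖u s‖₊ with husup
    obtain ⟨M, hM⟩ := hubdd
    have hunn : ∀ s : ℝ≥0, ‖u s‖₊ ≤ M.toNNReal := by
      intro s
      have h1 : Real.toNNReal ‖u s‖ ≤ Real.toNNReal M := Real.toNNReal_mono (hM s)
      rwa [show Real.toNNReal ‖u s‖ = ‖u s‖₊ from by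
        rw [← coe_nnnorm]; exact Real.toNNReal_coe] at h1
    have hule : ∀ s : ℝ≥0, s ≤ t → ‖u s‖₊ ≤ usup := by
      intro s hs
      have hmem : s ∈ Set.Icc (0:ℝ≥0) t := ⟨zero_le, hs⟩
      have hbdd : BddAbove (Set.range fun s : ℝ≥0 =>
          ⨆ _ : s ∈ Set.Icc (0:ℝ≥0) t, ‖u s‖₊) := by
        refine ⟨M.toNNReal, ?_⟩
        rintro y ⟨s', rfl⟩
        show (⨆ _ : s' ∈ Set.Icc (0:ℝ≥0) t, ‖u s'‖₊) ≤ M.toNNReal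
        by_cases h : s' ∈ Set.Icc (0:ℝ≥0) t
        · rw [ciSup_pos h]; exact hunn s'
        · rw [ciSup_neg h, csSup_empty]; exact zero_le
      calc ‖u s‖₊ = ⨆ _ : s ∈ Set.Icc (0:ℝ≥0) t, ‖u s‖₊ :=
            (ciSup_pos (f := fun _ => ‖u s‖₊) hmem).symm
        _ ≤ usup := le_ciSup hbdd s
    set bR : ℝ≥0 := e₂ (χ usup) with hbRdef
    have hbR : ∀ s : ℝ≥0, s ≤ t → e₂ (χ ‖u s‖₊) ≤ bR :=
      fun s hs => e₂.monotone (hχ.2.1.monotone (hule s hs))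
    set v₂ : ℝ≥0 := e₂ ‖x 0‖₊ with hv₂def
    set tgt : ℝ≥0 := betahat e₁ e₂ W v₂ t with htgt
    have hV0le : V 0 ≤ v₂ := (hsand 0).2
    have hmain : (V t : ℝ) ≤ max (bR:ℝ) (tgt:ℝ) := by
      apply le_of_forall_pos_le_add
      intro δ hδ
      have hchoice : ∃ ε : ℝ, 0 < ε ∧
          LInv e₁ e₂ W (Lfun e₁ e₂ W ((V 0:ℝ) + ε) - (t:ℝ)) ≤ (tgt:ℝ) + δ := by
        rcases eq_or_ne v₂ 0 with h0 | hpos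
        · have hx0 : V 0 = 0 := by
            have h2 := hV0le
            rw [h0] at h2
            exact le_antisymm h2 zero_le
          refine ⟨δ, hδ, ?_⟩
          have htgt0 : tgt = 0 := by rw [htgt, h0, betahat_zero]
          have h1 : LInv e₁ e₂ W (Lfun e₁ e₂ W ((V 0:ℝ) + δ) - (t:ℝ)) ≤
              LInv e₁ e₂ W (Lfun e₁ e₂ W ((V 0:ℝ) + δ)) := by
            apply (LInv_strictMono e₁ e₂ W hWc hWpos).monotone
            have := t.coe_nonneg
            linarith
          have h2 : LInv e₁ e₂ W (Lfun e₁ e₂ W ((V 0:ℝ) + δ)) = (V 0:ℝ) + δ :=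
            LInv_Lfun e₁ e₂ W hWc hWpos (by positivity)
          rw [htgt0, hx0]
          rw [hx0] at h1 h2
          push_cast at h1 h2 ⊢
          linarith
        · have hv₂pos : (0:ℝ) < (v₂:ℝ) := by
            exact_mod_cast lt_of_le_of_ne zero_le (Ne.symm hpos)
          have hcont : ContinuousAt
              (fun e : ℝ => LInv e₁ e₂ W (Lfun e₁ e₂ W ((v₂:ℝ) + e) - (t:ℝ))) 0 := by
            have hc1 : ContinuousAt (fun e : ℝ => (v₂:ℝ) + e) 0 :=
              continuousAt_const.add continuousAt_id
            have hc2 : ContinuousAt (Lfun e₁ e₂ W) ((fun e : ℝ => (v₂:ℝ) + e) 0) := by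
              show ContinuousAt (Lfun e₁ e₂ W) ((v₂:ℝ) + 0)
              rw [add_zero]
              exact Lfun_continuousAt e₁ e₂ W hWc hWpos hv₂pos
            exact ((LInv_continuous e₁ e₂ W hWc hWpos).continuousAt).comp
              ((hc2.comp hc1).sub continuousAt_const)
          have hval : LInv e₁ e₂ W (Lfun e₁ e₂ W ((v₂:ℝ) + 0) - (t:ℝ)) = (tgt:ℝ) := by
            rw [add_zero, ← coe_betahat e₁ e₂ W hWc hWpos hpos t]
          have hev : ∀ᶠ e in 𝓝 (0:ℝ),
              LInv e₁ e₂ W (Lfun e₁ e₂ W ((v₂:ℝ) + e) - (t:ℝ)) < (tgt:ℝ) + δ := by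
            apply hcont.eventually_lt continuousAt_const
            rw [hval]; linarith
          have hevW : ∀ᶠ e in 𝓝[>] (0:ℝ),
              LInv e₁ e₂ W (Lfun e₁ e₂ W ((v₂:ℝ) + e) - (t:ℝ)) < (tgt:ℝ) + δ :=
            hev.filter_mono nhdsWithin_le_nhds
          obtain ⟨ε, hlt, hεpos⟩ := (hevW.and self_mem_nhdsWithin).exists
          refine ⟨ε, hεpos, ?_⟩
          have hV0R : (V 0 : ℝ) ≤ (v₂:ℝ) := by exact_mod_cast hV0le
          have hL : Lfun e₁ e₂ W ((V 0:ℝ) + ε) ≤ Lfun e₁ e₂ W ((v₂:ℝ) + ε) := by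
            rcases eq_or_lt_of_le hV0R with heq | hlt'
            · rw [heq]
            · exact ((Lfun_strictMonoOn e₁ e₂ W hWc hWpos)
                (mem_Ioi.2 (by positivity)) (mem_Ioi.2 (by positivity))
                (by linarith)).le
          have h3 := (LInv_strictMono e₁ e₂ W hWc hWpos).monotone
            (by linarith : Lfun e₁ e₂ W ((V 0:ℝ) + ε) - (t:ℝ) ≤
              Lfun e₁ e₂ W ((v₂:ℝ) + ε) - (t:ℝ))
          exact le_trans h3 hlt.le
      obtain ⟨ε, hε, hεle⟩ := hchoice
      have hkey := traj_key e₁ e₂ W χ hWc hWpos x u V hV hsand hdini t bR hbR hε hδ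
      calc (V t:ℝ) ≤ max ((bR:ℝ)+δ) (LInv e₁ e₂ W (Lfun e₁ e₂ W ((V 0:ℝ)+ε) - (t:ℝ))) :=
            hkey
        _ ≤ max ((bR:ℝ)+δ) ((tgt:ℝ)+δ) := max_le_max le_rfl hεle
        _ = max (bR:ℝ) (tgt:ℝ) + δ := max_add_add_right _ _ _
    have hVle : V t ≤ max bR tgt := by
      rw [← NNReal.coe_le_coe]
      push_cast
      exact hmain
    have h1 : e₁ ‖x t‖₊ ≤ max bR tgt := le_trans (hsand t).1 hVle
    have h2 : ‖x t‖₊ ≤ e₁.symm (max bR tgt) := e₁.le_symm_apply.2 h1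
    refine le_trans h2 ?_
    rw [e₁.symm.map_sup]
    show max (e₁.symm bR) (e₁.symm tgt) ≤ _
    exact max_le le_add_self le_self_add
end

section
/- Let β₁, β₂ be class-KL functions and γ₁, γ₂ class-K functions. Then there exist a class-KL function β and a class-K function γ such that: for all functions a, b : ℝ≥0 → ℝ≥0 and every bounded function u : ℝ≥0 → ℝ≥0 satisfying, for all 0 ≤ t₀ ≤ t, the two estimates a(t) ≤ β₁(a(t₀), t − t₀) + γ₁(sup_{t₀ ≤ s ≤ t} u(s)) and b(t) ≤ β₂(b(t₀), t − t₀) + γ₂(sup_{t₀ ≤ s ≤ t} a(s)), one has b(t) ≤ β(a(0) + b(0), t) + γ(sup_{0 ≤ s ≤ t} u(s)) for all t ≥ 0. (This is the theorem that the cascade connection of two ISS systems is ISS, stated in terms of the trajectory estimates.) -/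
open Filter Set
open scoped NNReal

namespace IssCascadeAux

variable {β : ℝ≥0 → ℝ≥0 → ℝ≥0} {γ : ℝ≥0 → ℝ≥0}

lemma kMono (h : ClassK γ) : Monotone γ := h.2.1.monotone

lemma klZero (h : ClassKL β) (t : ℝ≥0) : β 0 t = 0 := (h.1 t).2.2

lemma klMono (h : ClassKL β) (t : ℝ≥0) : Monotone (fun r => β r t) :=
  (h.1 t).2.1.monotone

lemma klAnti (h : ClassKL β) (r : ℝ≥0) : Antitone (β r) := by
  rcases eq_or_lt_of_le (zero_le (a := r)) with hr | hr
  · intro s s' _; simp [← hr, klZero h]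
  · exact (h.2 r hr).2.1.antitone

lemma klLe (h : ClassKL β) {r r' s s' : ℝ≥0} (hr : r ≤ r') (hs : s' ≤ s) :
    β r s ≤ β r' s' :=
  (klMono h s hr).trans (klAnti h r' hs)

lemma split {f : ℝ≥0 → ℝ≥0} (hf : Monotone f) (x y : ℝ≥0) :
    f (x + y) ≤ f (2 * x) + f (2 * y) := by
  rcases le_total x y with hxy | hxy
  · calc f (x + y) ≤ f (2 * y) := hf (by rw [two_mul]; exact add_le_add_left hxy y)
    _ ≤ f (2 * x) + f (2 * y) := le_add_self
  · calc f (x + y) ≤ f (2 * x) := hf (by rw [two_mul]; exact add_le_add_right hxy x)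
    _ ≤ f (2 * x) + f (2 * y) := le_self_add

lemma chain {f : ℝ≥0 → ℝ≥0} (hf : Monotone f) {z x y : ℝ≥0} (hz : z ≤ x + y) :
    f (2 * z) ≤ f (4 * x) + f (4 * y) := by
  calc f (2 * z) ≤ f (2 * x + 2 * y) := hf (by rw [← mul_add]; exact mul_le_mul_right hz 2)
  _ ≤ f (2 * (2 * x)) + f (2 * (2 * y)) := split hf _ _
  _ = f (4 * x) + f (4 * y) := by ring_nf

lemma mul2 : StrictMono (fun x : ℝ≥0 => 2 * x) :=
  fun _ _ h => mul_lt_mul_of_pos_left h two_pos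

lemma mul4 : StrictMono (fun x : ℝ≥0 => 4 * x) :=
  fun _ _ h => mul_lt_mul_of_pos_left h four_pos

lemma biSup_le {f : ℝ≥0 → ℝ≥0} {S : Set ℝ≥0} {c : ℝ≥0} (h : ∀ s ∈ S, f s ≤ c) :
    (⨆ s ∈ S, f s) ≤ c :=
  ciSup_le' fun s => ciSup_le' fun hs => h s hs

lemma le_biSup {u : ℝ≥0 → ℝ≥0} {M : ℝ≥0} (hM : ∀ s, u s ≤ M) {S : Set ℝ≥0}
    {s : ℝ≥0} (hs : s ∈ S) : u s ≤ ⨆ s ∈ S, u s := by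
  have hbdd : BddAbove (Set.range fun s => ⨆ _ : s ∈ S, u s) := by
    refine ⟨M, ?_⟩
    rintro x ⟨y, rfl⟩
    exact ciSup_le' fun _ => hM y
  have h1 : (⨆ _ : s ∈ S, u s) = u s := ciSup_pos (f := fun _ => u s) hs
  calc u s = ⨆ _ : s ∈ S, u s := h1.symm
  _ ≤ ⨆ s ∈ S, u s := le_ciSup hbdd s

/-- The KL bound used in the cascade theorem. -/
noncomputable def BFun (β₁ β₂ : ℝ≥0 → ℝ≥0 → ℝ≥0) (γ₂ : ℝ≥0 → ℝ≥0) (r t : ℝ≥0) : ℝ≥0 :=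
  min (β₂ (2 * β₂ r (t / 2)) 0) (β₂ (2 * β₂ r 0) (t / 2))
    + β₂ (4 * γ₂ (2 * β₁ r 0)) (t / 2)
    + γ₂ (4 * β₁ (2 * β₁ r (t / 2)) 0)

/-- The K bound used in the cascade theorem. -/
noncomputable def GFun (β₁ β₂ : ℝ≥0 → ℝ≥0 → ℝ≥0) (γ₁ γ₂ : ℝ≥0 → ℝ≥0) (s : ℝ≥0) : ℝ≥0 :=
  β₂ (4 * γ₂ (2 * γ₁ s)) 0 + γ₂ (4 * β₁ (2 * γ₁ s) 0) + γ₂ (2 * γ₁ s)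

end IssCascadeAux

open IssCascadeAux in
/-- The cascade connection of two ISS systems is ISS, stated in terms of
trajectory estimates. -/
theorem iss_cascade
    (β₁ β₂ : ℝ≥0 → ℝ≥0 → ℝ≥0) (hβ₁ : ClassKL β₁) (hβ₂ : ClassKL β₂)
    (γ₁ γ₂ : ℝ≥0 → ℝ≥0) (hγ₁ : ClassK γ₁) (hγ₂ : ClassK γ₂) :
    ∃ β : ℝ≥0 → ℝ≥0 → ℝ≥0, ∃ γ : ℝ≥0 → ℝ≥0, ClassKL β ∧ ClassK γ ∧
      ∀ a b u : ℝ≥0 → ℝ≥0,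
        (∃ M : ℝ≥0, ∀ t, u t ≤ M) →
        (∀ t₀ t : ℝ≥0, t₀ ≤ t →
          a t ≤ β₁ (a t₀) (t - t₀) + γ₁ (⨆ s ∈ Set.Icc t₀ t, u s)) →
        (∀ t₀ t : ℝ≥0, t₀ ≤ t →
          b t ≤ β₂ (b t₀) (t - t₀) + γ₂ (⨆ s ∈ Set.Icc t₀ t, a s)) →
        ∀ t : ℝ≥0, b t ≤ β (a 0 + b 0) t + γ (⨆ s ∈ Set.Icc (0 : ℝ≥0) t, u s) := by
  -- basic facts
  have cβ₁ : ∀ t, Continuous (fun r => β₁ r t) := fun t => (hβ₁.1 t).1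
  have cβ₂ : ∀ t, Continuous (fun r => β₂ r t) := fun t => (hβ₂.1 t).1
  have sβ₁ : ∀ t, StrictMono (fun r => β₁ r t) := fun t => (hβ₁.1 t).2.1
  have sβ₂ : ∀ t, StrictMono (fun r => β₂ r t) := fun t => (hβ₂.1 t).2.1
  have pβ₁ : ∀ {r : ℝ≥0}, 0 < r → ∀ t, 0 < β₁ r t := fun {r} hr t => by
    simpa [klZero hβ₁ t] using sβ₁ t hr
  have pβ₂ : ∀ {r : ℝ≥0}, 0 < r → ∀ t, 0 < β₂ r t := fun {r} hr t => by
    simpa [klZero hβ₂ t] using sβ₂ t hr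
  have pγ₂ : ∀ {x : ℝ≥0}, 0 < x → 0 < γ₂ x := fun {x} hx => by
    have := hγ₂.2.1 hx; rwa [hγ₂.2.2] at this
  have chalf : Continuous (fun t : ℝ≥0 => t / 2) := by
    simpa [div_eq_mul_inv] using (continuous_mul_const (2⁻¹ : ℝ≥0))
  have half_lt : ∀ {x y : ℝ≥0}, x < y → x / 2 < y / 2 := fun {x y} h =>
    (div_lt_div_iff_of_pos_right two_pos).2 h
  have half_le_self : ∀ x : ℝ≥0, x / 2 ≤ x := fun x =>
    div_le_self (zero_le (a := x)) one_le_two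
  have half_tendsto : Tendsto (fun t : ℝ≥0 => t / 2) atTop atTop := by
    refine tendsto_atTop_atTop.2 fun c => ⟨2 * c, fun x hx => ?_⟩
    rw [le_div_iff₀ (two_pos)]
    calc c * 2 = 2 * c := mul_comm _ _
    _ ≤ x := hx
  refine ⟨BFun β₁ β₂ γ₂, GFun β₁ β₂ γ₁ γ₂, ?_, ?_, ?_⟩
  · -- ClassKL of BFun
    constructor
    · intro t
      refine ⟨?_, ?_, ?_⟩
      · exact (((cβ₂ 0).comp (continuous_const.mul (cβ₂ (t / 2)))).min
          ((cβ₂ (t / 2)).comp (continuous_const.mul (cβ₂ 0)))).add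
          ((cβ₂ (t / 2)).comp (continuous_const.mul (hγ₂.1.comp
            (continuous_const.mul (cβ₁ 0))))) |>.add
          (hγ₂.1.comp (continuous_const.mul ((cβ₁ 0).comp
            (continuous_const.mul (cβ₁ (t / 2))))))
      · intro x y hxy
        have h1 : min (β₂ (2 * β₂ x (t / 2)) 0) (β₂ (2 * β₂ x 0) (t / 2))
            < min (β₂ (2 * β₂ y (t / 2)) 0) (β₂ (2 * β₂ y 0) (t / 2)) :=
          lt_min ((min_le_left _ _).trans_lt (sβ₂ 0 (mul2 (sβ₂ (t / 2) hxy))))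
            ((min_le_right _ _).trans_lt (sβ₂ (t / 2) (mul2 (sβ₂ 0 hxy))))
        have h2 : β₂ (4 * γ₂ (2 * β₁ x 0)) (t / 2)
            < β₂ (4 * γ₂ (2 * β₁ y 0)) (t / 2) :=
          sβ₂ (t / 2) (mul4 (hγ₂.2.1 (mul2 (sβ₁ 0 hxy))))
        have h3 : γ₂ (4 * β₁ (2 * β₁ x (t / 2)) 0)
            < γ₂ (4 * β₁ (2 * β₁ y (t / 2)) 0) :=
          hγ₂.2.1 (mul4 (sβ₁ 0 (mul2 (sβ₁ (t / 2) hxy))))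
        exact add_lt_add (add_lt_add h1 h2) h3
      · simp [BFun, klZero hβ₁, klZero hβ₂, hγ₂.2.2]
    · intro r hr
      have hβ₁r0 : 0 < β₁ r 0 := pβ₁ hr 0
      have hc₂ : 0 < 4 * γ₂ (2 * β₁ r 0) :=
        mul_pos four_pos (pγ₂ (mul_pos two_pos hβ₁r0))
      have hc₁ : 0 < 2 * β₂ r 0 := mul_pos two_pos (pβ₂ hr 0)
      refine ⟨?_, ?_, ?_⟩
      · -- continuity in t
        have i1 : Continuous (fun t : ℝ≥0 => β₂ (2 * β₂ r (t / 2)) 0) :=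
          (cβ₂ 0).comp (continuous_const.mul ((hβ₂.2 r hr).1.comp chalf))
        have i2 : Continuous (fun t : ℝ≥0 => β₂ (2 * β₂ r 0) (t / 2)) :=
          (hβ₂.2 _ hc₁).1.comp chalf
        have i3 : Continuous (fun t : ℝ≥0 => β₂ (4 * γ₂ (2 * β₁ r 0)) (t / 2)) :=
          (hβ₂.2 _ hc₂).1.comp chalf
        have i4 : Continuous (fun t : ℝ≥0 => γ₂ (4 * β₁ (2 * β₁ r (t / 2)) 0)) :=
          hγ₂.1.comp (continuous_const.mul ((cβ₁ 0).comp
            (continuous_const.mul ((hβ₁.2 r hr).1.comp chalf))))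
        exact ((i1.min i2).add i3).add i4
      · -- strict antitonicity in t
        intro x y hxy
        have hxy2 := half_lt hxy
        have h1 : min (β₂ (2 * β₂ r (y / 2)) 0) (β₂ (2 * β₂ r 0) (y / 2))
            < min (β₂ (2 * β₂ r (x / 2)) 0) (β₂ (2 * β₂ r 0) (x / 2)) :=
          lt_min ((min_le_left _ _).trans_lt (sβ₂ 0 (mul2 ((hβ₂.2 r hr).2.1 hxy2))))
            ((min_le_right _ _).trans_lt ((hβ₂.2 _ hc₁).2.1 hxy2))
        have h2 : β₂ (4 * γ₂ (2 * β₁ r 0)) (y / 2)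
            < β₂ (4 * γ₂ (2 * β₁ r 0)) (x / 2) := (hβ₂.2 _ hc₂).2.1 hxy2
        have h3 : γ₂ (4 * β₁ (2 * β₁ r (y / 2)) 0)
            < γ₂ (4 * β₁ (2 * β₁ r (x / 2)) 0) :=
          hγ₂.2.1 (mul4 (sβ₁ 0 (mul2 ((hβ₁.2 r hr).2.1 hxy2))))
        exact add_lt_add (add_lt_add h1 h2) h3
      · -- tendsto 0
        have inner2 : Tendsto (fun t : ℝ≥0 => β₂ r (t / 2)) atTop (nhds 0) :=
          (hβ₂.2 r hr).2.2.comp half_tendsto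
        have F1 : Continuous (fun x : ℝ≥0 => β₂ (2 * x) 0) :=
          (cβ₂ 0).comp (continuous_const.mul continuous_id)
        have T1' : Tendsto (fun t : ℝ≥0 => β₂ (2 * β₂ r (t / 2)) 0) atTop (nhds 0) := by
          have := (F1.tendsto 0).comp inner2
          simpa [klZero hβ₂, Function.comp_def] using this
        have T1 : Tendsto (fun t : ℝ≥0 =>
            min (β₂ (2 * β₂ r (t / 2)) 0) (β₂ (2 * β₂ r 0) (t / 2))) atTop (nhds 0) :=
          tendsto_of_tendsto_of_tendsto_of_le_of_le tendsto_const_nhds T1'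
            (fun x => zero_le) (fun x => min_le_left _ _)
        have T2 : Tendsto (fun t : ℝ≥0 => β₂ (4 * γ₂ (2 * β₁ r 0)) (t / 2))
            atTop (nhds 0) := (hβ₂.2 _ hc₂).2.2.comp half_tendsto
        have inner1 : Tendsto (fun t : ℝ≥0 => β₁ r (t / 2)) atTop (nhds 0) :=
          (hβ₁.2 r hr).2.2.comp half_tendsto
        have F3 : Continuous (fun x : ℝ≥0 => γ₂ (4 * β₁ (2 * x) 0)) :=
          hγ₂.1.comp (continuous_const.mul ((cβ₁ 0).comp
            (continuous_const.mul continuous_id)))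
        have T3 : Tendsto (fun t : ℝ≥0 => γ₂ (4 * β₁ (2 * β₁ r (t / 2)) 0))
            atTop (nhds 0) := by
          have := (F3.tendsto 0).comp inner1
          simpa [klZero hβ₁, hγ₂.2.2, Function.comp_def] using this
        have := (T1.add T2).add T3
        simpa [BFun] using this
  · -- ClassK of GFun
    refine ⟨?_, ?_, ?_⟩
    · exact (((cβ₂ 0).comp (continuous_const.mul (hγ₂.1.comp
        (continuous_const.mul hγ₁.1)))).add
        (hγ₂.1.comp (continuous_const.mul ((cβ₁ 0).comp
          (continuous_const.mul hγ₁.1))))).add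
        (hγ₂.1.comp (continuous_const.mul hγ₁.1))
    · intro x y hxy
      have hg := hγ₁.2.1 hxy
      exact add_lt_add (add_lt_add (sβ₂ 0 (mul4 (hγ₂.2.1 (mul2 hg))))
        (hγ₂.2.1 (mul4 (sβ₁ 0 (mul2 hg))))) (hγ₂.2.1 (mul2 hg))
    · simp [GFun, hγ₁.2.2, hγ₂.2.2, klZero hβ₁, klZero hβ₂]
  · -- the main estimate
    intro a b u hu ha hb t
    obtain ⟨M, hM⟩ := hu
    set U := ⨆ s ∈ Set.Icc (0 : ℝ≥0) t, u s with hU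
    have hUb : ∀ t₀ t₁ : ℝ≥0, t₁ ≤ t → (⨆ s ∈ Set.Icc t₀ t₁, u s) ≤ U := by
      intro t₀ t₁ ht₁
      exact biSup_le fun s hs => le_biSup hM ⟨zero_le (a := s), hs.2.trans ht₁⟩
    have hhalf : t / 2 ≤ t := half_le_self t
    have hht : t - t / 2 = t / 2 := by
      exact tsub_eq_of_eq_add (add_halves t).symm
    -- bound on a on [0, t]
    have haS : ∀ s : ℝ≥0, s ≤ t → a s ≤ β₁ (a 0) 0 + γ₁ U := by
      intro s hs
      refine (ha 0 s (zero_le (a := s))).trans (add_le_add ?_ (kMono hγ₁ (hUb 0 s hs)))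
      exact klAnti hβ₁ (a 0) (zero_le)
    have hah : a (t / 2) ≤ β₁ (a 0) (t / 2) + γ₁ U := by
      refine (ha 0 (t / 2) (zero_le)).trans
        (add_le_add (le_of_eq (by rw [tsub_zero])) (kMono hγ₁ (hUb 0 (t / 2) hhalf)))
    have hA0 : (⨆ s ∈ Set.Icc (0 : ℝ≥0) (t / 2), a s) ≤ β₁ (a 0) 0 + γ₁ U :=
      biSup_le fun s hs => haS s (hs.2.trans hhalf)
    have hA1 : (⨆ s ∈ Set.Icc (t / 2) t, a s)
        ≤ β₁ (β₁ (a 0) (t / 2) + γ₁ U) 0 + γ₁ U := by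
      refine biSup_le fun s hs => (ha (t / 2) s hs.1).trans (add_le_add ?_
        (kMono hγ₁ (hUb (t / 2) s hs.2)))
      exact (klAnti hβ₁ (a (t / 2)) (zero_le)).trans (klMono hβ₁ 0 hah)
    have hbh : b (t / 2) ≤ β₂ (b 0) (t / 2) + γ₂ (β₁ (a 0) 0 + γ₁ U) := by
      refine (hb 0 (t / 2) (zero_le)).trans
        (add_le_add (le_of_eq (by rw [tsub_zero])) (kMono hγ₂ hA0))
    set r := a 0 + b 0 with hr
    have har : a 0 ≤ r := le_self_add
    have hbr : b 0 ≤ r := le_add_self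
    -- pieces
    have P1 : β₂ (2 * β₂ (b 0) (t / 2)) (t / 2)
        ≤ min (β₂ (2 * β₂ r (t / 2)) 0) (β₂ (2 * β₂ r 0) (t / 2)) := by
      refine le_min ?_ ?_
      · exact klLe hβ₂ (mul_le_mul_right (klMono hβ₂ (t / 2) hbr) 2) (zero_le)
      · exact klLe hβ₂ (mul_le_mul_right (klLe hβ₂ hbr (zero_le)) 2) le_rfl
    have P2 : β₂ (2 * γ₂ (β₁ (a 0) 0 + γ₁ U)) (t / 2)
        ≤ β₂ (4 * γ₂ (2 * β₁ r 0)) (t / 2) + β₂ (4 * γ₂ (2 * γ₁ U)) 0 := by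
      have step : β₂ (2 * γ₂ (β₁ (a 0) 0 + γ₁ U)) (t / 2)
          ≤ β₂ (4 * γ₂ (2 * β₁ (a 0) 0)) (t / 2) + β₂ (4 * γ₂ (2 * γ₁ U)) (t / 2) :=
        chain (klMono hβ₂ (t / 2)) (split (kMono hγ₂) _ _)
      refine step.trans (add_le_add ?_ ?_)
      · exact klMono hβ₂ (t / 2)
          (mul_le_mul_right (kMono hγ₂ (mul_le_mul_right (klMono hβ₁ 0 har) 2)) 4)
      · exact klAnti hβ₂ _ (zero_le)
    have P3 : γ₂ (2 * β₁ (β₁ (a 0) (t / 2) + γ₁ U) 0)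
        ≤ γ₂ (4 * β₁ (2 * β₁ r (t / 2)) 0) + γ₂ (4 * β₁ (2 * γ₁ U) 0) := by
      have step : γ₂ (2 * β₁ (β₁ (a 0) (t / 2) + γ₁ U) 0)
          ≤ γ₂ (4 * β₁ (2 * β₁ (a 0) (t / 2)) 0) + γ₂ (4 * β₁ (2 * γ₁ U) 0) :=
        chain (kMono hγ₂) (split (klMono hβ₁ 0) _ _)
      refine step.trans (add_le_add ?_ le_rfl)
      exact kMono hγ₂ (mul_le_mul_right
        (klMono hβ₁ 0 (mul_le_mul_right (klMono hβ₁ (t / 2) har) 2)) 4)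
    calc b t ≤ β₂ (b (t / 2)) (t - t / 2) + γ₂ (⨆ s ∈ Set.Icc (t / 2) t, a s) :=
        hb (t / 2) t hhalf
    _ = β₂ (b (t / 2)) (t / 2) + γ₂ (⨆ s ∈ Set.Icc (t / 2) t, a s) := by rw [hht]
    _ ≤ β₂ (β₂ (b 0) (t / 2) + γ₂ (β₁ (a 0) 0 + γ₁ U)) (t / 2)
        + γ₂ (β₁ (β₁ (a 0) (t / 2) + γ₁ U) 0 + γ₁ U) :=
        add_le_add (klMono hβ₂ (t / 2) hbh) (kMono hγ₂ hA1)
    _ ≤ (β₂ (2 * β₂ (b 0) (t / 2)) (t / 2) + β₂ (2 * γ₂ (β₁ (a 0) 0 + γ₁ U)) (t / 2))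
        + (γ₂ (2 * β₁ (β₁ (a 0) (t / 2) + γ₁ U) 0) + γ₂ (2 * γ₁ U)) :=
        add_le_add (split (klMono hβ₂ (t / 2)) _ _) (split (kMono hγ₂) _ _)
    _ ≤ (min (β₂ (2 * β₂ r (t / 2)) 0) (β₂ (2 * β₂ r 0) (t / 2))
          + (β₂ (4 * γ₂ (2 * β₁ r 0)) (t / 2) + β₂ (4 * γ₂ (2 * γ₁ U)) 0))
        + ((γ₂ (4 * β₁ (2 * β₁ r (t / 2)) 0) + γ₂ (4 * β₁ (2 * γ₁ U) 0))
          + γ₂ (2 * γ₁ U)) :=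
        add_le_add (add_le_add P1 P2) (add_le_add P3 le_rfl)
    _ = BFun β₁ β₂ γ₂ r t + GFun β₁ β₂ γ₁ γ₂ U := by
        simp only [BFun, GFun]; ring
end

section
/- Let H be a real inner product space, e ∈ H a fixed vector, N ∈ ℕ, α > 0, and a, b : Fin N → Fin N → ℝ arbitrary real coefficients. Suppose ψ, φ : ℝ≥0 → (Fin N → H) are differentiable and z : ℝ≥0 → (Fin N → H) satisfies ⟪z_i(t), e⟫ = 1 for all i and t, and that for every i and t ≥ 0: ψ_i'(t) = −α(ψ_i(t) − z_i(t)) − Σ_j a_{ij}(ψ_i(t) − ψ_j(t)) + Σ_j b_{ji}(φ_i(t) − φ_j(t)) and φ_i'(t) = −Σ_j b_{ij}(ψ_i(t) − ψ_j(t)). If ⟪ψ_i(0), e⟫ = 1 and ⟪φ_i(0), e⟫ = 1 for all i, then ⟪ψ_i(t), e⟫ = 1 and ⟪φ_i(t), e⟫ = 1 for all i and all t ≥ 0. (Mass conservation of the PI consensus estimator: taking H = L²(Ω) and e the constant function 1 gives that each internal state of the estimator keeps unit total mass.) -/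
open Set

/-- The linear vector field of the projected PI consensus dynamics. -/
def piLin (N : ℕ) (α : ℝ) (a b : Fin N → Fin N → ℝ) :
    ((Fin N → ℝ) × (Fin N → ℝ)) →ₗ[ℝ] ((Fin N → ℝ) × (Fin N → ℝ)) where
  toFun p := (fun i => -(α * p.1 i) - ∑ j, a i j * (p.1 i - p.1 j)
      + ∑ j, b j i * (p.2 i - p.2 j),
    fun i => -(∑ j, b i j * (p.1 i - p.1 j)))
  map_add' p q := by
    refine Prod.ext ?_ ?_ <;> funext i <;>
      simp only [Prod.fst_add, Prod.snd_add, Pi.add_apply, mul_sub, mul_add,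
        Finset.sum_sub_distrib, Finset.sum_add_distrib] <;> ring
  map_smul' c p := by
    refine Prod.ext ?_ ?_ <;> funext i <;>
      simp [Finset.mul_sum, mul_sub, mul_add, Finset.sum_sub_distrib,
        mul_comm, mul_left_comm]


/-- Mass conservation of the PI consensus estimator in an inner product space:
if each input has unit "mass" `⟪z_i(t), e⟫ = 1` and the internal states start with
unit mass, they keep unit mass for all time. -/
theorem pi_consensus_mass_conservation
    {H : Type*} [NormedAddCommGroup H] [InnerProductSpace ℝ H]
    (e : H) (N : ℕ) (α : ℝ) (hα : 0 < α)
    (a b : Fin N → Fin N → ℝ)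
    (ψ φ z : ℝ → Fin N → H)
    (hz : ∀ i : Fin N, ∀ t : ℝ, 0 ≤ t → inner ℝ (z t i) e = (1 : ℝ))
    (hψ' : ∀ i : Fin N, ∀ t : ℝ, 0 ≤ t →
      HasDerivWithinAt (fun s => ψ s i)
        (-(α • (ψ t i - z t i)) - ∑ j, a i j • (ψ t i - ψ t j)
          + ∑ j, b j i • (φ t i - φ t j)) (Set.Ici 0) t)
    (hφ' : ∀ i : Fin N, ∀ t : ℝ, 0 ≤ t →
      HasDerivWithinAt (fun s => φ s i)
        (-(∑ j, b i j • (ψ t i - ψ t j))) (Set.Ici 0) t)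
    (hψ0 : ∀ i : Fin N, inner ℝ (ψ 0 i) e = (1 : ℝ))
    (hφ0 : ∀ i : Fin N, inner ℝ (φ 0 i) e = (1 : ℝ)) :
    ∀ i : Fin N, ∀ t : ℝ, 0 ≤ t →
      inner ℝ (ψ t i) e = (1 : ℝ) ∧ inner ℝ (φ t i) e = (1 : ℝ) := by
  classical
  set L := LinearMap.toContinuousLinearMap (piLin N α a b) with hLdef
  set v : ℝ → (Fin N → ℝ) × (Fin N → ℝ) :=
    fun t => (fun i => inner ℝ (ψ t i) e - 1, fun i => inner ℝ (φ t i) e - 1) with hvdef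
  -- the linear functional x ↦ ⟪x, e⟫
  set F : H →L[ℝ] ℝ := (innerSL ℝ).flip e with hFdef
  have hF : ∀ x : H, F x = inner ℝ x e := fun x => rfl
  have hvderiv : ∀ t : ℝ, 0 ≤ t → HasDerivWithinAt v (L (v t)) (Ici 0) t := by
    intro t ht
    have hx : ∀ i, HasDerivWithinAt (fun s => (inner ℝ (ψ s i) e : ℝ) - 1)
        ((L (v t)).1 i) (Ici 0) t := by
      intro i
      have h1 := (F.hasFDerivAt.comp_hasDerivWithinAt t (hψ' i t ht)).sub_const 1
      refine h1.congr_deriv (Eq.symm ?_)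
      simp only [hLdef, LinearMap.coe_toContinuousLinearMap', piLin, LinearMap.coe_mk,
        AddHom.coe_mk, hF, hvdef, map_sub, map_add, map_neg, map_smul, map_sum,
        smul_eq_mul, inner_sub_left, inner_add_left, inner_neg_left, sum_inner, real_inner_smul_left, hz i t ht,
        mul_sub, mul_comm]
      ring_nf
      simp only [mul_comm, Finset.sum_sub_distrib]
    have hy : ∀ i, HasDerivWithinAt (fun s => (inner ℝ (φ s i) e : ℝ) - 1)
        ((L (v t)).2 i) (Ici 0) t := by
      intro i
      have h1 := (F.hasFDerivAt.comp_hasDerivWithinAt t (hφ' i t ht)).sub_const 1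
      refine h1.congr_deriv (Eq.symm ?_)
      simp only [hLdef, LinearMap.coe_toContinuousLinearMap', piLin, LinearMap.coe_mk,
        AddHom.coe_mk, hF, hvdef, map_sub, map_neg, map_sum, map_smul,
        smul_eq_mul, inner_sub_left, inner_add_left, inner_neg_left, sum_inner, real_inner_smul_left, mul_sub, mul_comm]
      ring_nf
      simp only [mul_comm]
    exact HasDerivWithinAt.prodMk (hasDerivWithinAt_pi.mpr hx) (hasDerivWithinAt_pi.mpr hy)
  intro i t ht
  have key : EqOn v (fun _ => (0 : (Fin N → ℝ) × (Fin N → ℝ))) (Icc 0 t) := by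
    apply ODE_solution_unique_of_mem_Icc_right
      (v := fun _ x => L x) (s := fun _ => (univ : Set ((Fin N → ℝ) × (Fin N → ℝ))))
      (K := ‖L‖₊) (fun _ _ => L.lipschitz.lipschitzOnWith)
    · exact fun s hs => ((hvderiv s hs.1).continuousWithinAt).mono Icc_subset_Ici_self
    · exact fun s hs => (hvderiv s hs.1).mono (Ici_subset_Ici.mpr hs.1)
    · exact fun _ _ => mem_univ _
    · exact continuousOn_const
    · intro s hs
      simpa using (hasDerivWithinAt_const s (Ici s) (0 : (Fin N → ℝ) × (Fin N → ℝ)))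
    · exact fun _ _ => mem_univ _
    · refine Prod.ext ?_ ?_ <;> funext j <;> simp [hvdef, hψ0, hφ0]
  have hvt : v t = 0 := key ⟨le_refl t |> fun _ => ht, le_refl t⟩
  have h1 : (fun i => (inner ℝ (ψ t i) e : ℝ) - 1) = 0 := congrArg Prod.fst hvt
  have h2 : (fun i => (inner ℝ (φ t i) e : ℝ) - 1) = 0 := congrArg Prod.snd hvt
  constructor
  · have := congrFun h1 i
    simpa [sub_eq_zero] using this
  · have := congrFun h2 i
    simpa [sub_eq_zero] using this
end

section
/- Let m ∈ ℕ, α > 0, and let S, Q be m×m real symmetric matrices with S positive definite and Q positive semidefinite. Define the (2m+1)×(2m+1) real block matrix A = [[0, 0, −S], [0, −α, 0], [S, 0, −αI − Q]], where the middle block is the 1×1 scalar −α. Then every eigenvalue μ ∈ ℂ of A satisfies Re μ < 0, i.e. A is Hurwitz. (This is the stability of the transformed error dynamics of the PI consensus estimator.) -/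
open Matrix
open scoped ComplexOrder

lemma psd_map_ofReal {m : ℕ} {Q : Matrix (Fin m) (Fin m) ℝ} (hQ : Q.PosSemidef) :
    (Q.map Complex.ofReal).PosSemidef := by
  obtain ⟨k, w, hw⟩ := Matrix.posSemidef_iff_eq_sum_vecMulVec.mp hQ
  rw [Matrix.posSemidef_iff_eq_sum_vecMulVec]
  refine ⟨k, fun i j => (w i j : ℂ), ?_⟩
  rw [hw]; ext a b; simp [vecMulVec_apply, Matrix.sum_apply]

lemma herm_map_ofReal {m : ℕ} {S : Matrix (Fin m) (Fin m) ℝ} (hS : S.IsHermitian) :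
    (S.map Complex.ofReal)ᴴ = S.map Complex.ofReal := by
  rw [← Matrix.conjTranspose_map Complex.ofReal (fun a => by simp [Complex.conj_ofReal]), hS.eq]

/-- The transformed error dynamics matrix of the PI consensus estimator
`A = [[0, 0, −S], [0, −α, 0], [S, 0, −αI − Q]]` is Hurwitz whenever `S` is
symmetric positive definite and `Q` is symmetric positive semidefinite. -/
theorem pi_error_matrix_hurwitz
    (m : ℕ) (α : ℝ) (hα : 0 < α)
    (S Q : Matrix (Fin m) (Fin m) ℝ)
    (hS : S.PosDef) (hQ : Q.PosSemidef) :
    ∀ μ : ℂ,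
      Module.End.HasEigenvalue
        (Matrix.toLin'
          ((Matrix.fromBlocks
            (Matrix.fromBlocks (0 : Matrix (Fin m) (Fin m) ℝ)
              (0 : Matrix (Fin m) (Fin 1) ℝ)
              (0 : Matrix (Fin 1) (Fin m) ℝ)
              ((-α) • (1 : Matrix (Fin 1) (Fin 1) ℝ)))
            (Matrix.fromRows (-S) (0 : Matrix (Fin 1) (Fin m) ℝ))
            (Matrix.fromCols S (0 : Matrix (Fin m) (Fin 1) ℝ))
            ((-α) • (1 : Matrix (Fin m) (Fin m) ℝ) - Q)).map
            (Complex.ofReal))) μ →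
      μ.re < 0 := by
  intro μ hμ
  obtain ⟨v, hv⟩ := hμ.exists_hasEigenvector
  have hv0 : v ≠ 0 := hv.right
  have hveq : _ = μ • v := hv.apply_eq_smul
  rw [Matrix.toLin'_apply] at hveq
  set Sc := S.map Complex.ofReal with hSc
  set Qc := Q.map Complex.ofReal with hQc
  set x : Fin m → ℂ := fun i => v (Sum.inl (Sum.inl i)) with hx
  set z : Fin m → ℂ := fun i => v (Sum.inr i) with hz
  set y : ℂ := v (Sum.inl (Sum.inr 0)) with hy
  -- componentwise equations
  have eq1 : μ • x = -(Sc *ᵥ z) := by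
    funext i
    have h := congrFun hveq (Sum.inl (Sum.inl i))
    simp [Matrix.mulVec, dotProduct, Fintype.sum_sum_type, Matrix.map_apply,
      hSc, hx, hz] at h ⊢
    linear_combination -h
  have eq2 : μ * y = -(α : ℂ) * y := by
    have h := congrFun hveq (Sum.inl (Sum.inr 0))
    simp [Matrix.mulVec, dotProduct, Fintype.sum_sum_type, Matrix.map_apply, hy] at h ⊢
    linear_combination -h
  have eq3 : μ • z = Sc *ᵥ x - (α : ℂ) • z - Qc *ᵥ z := by
    funext i
    have h := congrFun hveq (Sum.inr i)
    simp [Matrix.mulVec, dotProduct, Fintype.sum_sum_type, Matrix.map_apply,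
      hSc, hQc, hx, hz, sub_mul, Finset.sum_sub_distrib, Matrix.one_apply, mul_ite, ite_mul,
      mul_zero, zero_mul, mul_one, apply_ite Complex.ofReal, Complex.ofReal_zero,
      Finset.sum_ite_eq, Finset.sum_ite_eq'] at h ⊢
    linear_combination -h
  -- dot products
  set X : ℝ := ∑ i, Complex.normSq (x i) with hX
  set Z : ℝ := ∑ i, Complex.normSq (z i) with hZ
  have hXnn : 0 ≤ X := Finset.sum_nonneg fun i _ => Complex.normSq_nonneg _
  have hZnn : 0 ≤ Z := Finset.sum_nonneg fun i _ => Complex.normSq_nonneg _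
  have hsx : star x ⬝ᵥ x = (X : ℂ) := by
    simp only [dotProduct, Pi.star_apply, Complex.star_def,
      ← Complex.normSq_eq_conj_mul_self, hX]
    push_cast
    ring
  have hsz : star z ⬝ᵥ z = (Z : ℂ) := by
    simp only [dotProduct, Pi.star_apply, Complex.star_def,
      ← Complex.normSq_eq_conj_mul_self, hZ]
    push_cast
    ring
  set s : ℂ := star x ⬝ᵥ (Sc *ᵥ z) with hs
  set q : ℂ := star z ⬝ᵥ (Qc *ᵥ z) with hq
  have hScH : Scᴴ = Sc := herm_map_ofReal hS.isHermitian
  have key : star z ⬝ᵥ (Sc *ᵥ x) = star s := by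
    rw [hs, Matrix.star_dotProduct, Matrix.star_mulVec, hScH, ← Matrix.dotProduct_mulVec]
  have h1 : μ * (X : ℂ) = -s := by
    have h := congrArg (fun w => star x ⬝ᵥ w) eq1
    simpa [dotProduct_smul, dotProduct_neg, hsx, smul_eq_mul, hs] using h
  have h3 : μ * (Z : ℂ) = star s - (α : ℂ) * Z - q := by
    have h := congrArg (fun w => star z ⬝ᵥ w) eq3
    simpa [dotProduct_smul, dotProduct_sub, hsz, smul_eq_mul, key, hq] using h
  have hqre : 0 ≤ q.re := by
    have := (psd_map_ofReal hQ).re_dotProduct_nonneg z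
    simpa [hq, hQc, RCLike.re_to_complex] using this
  -- main real-part identity
  have main : μ.re * (X + Z) = -α * Z - q.re := by
    have hsum : μ * ((X : ℂ) + (Z : ℂ)) = (-s + star s) - (α : ℂ) * Z - q := by
      rw [mul_add, h1, h3]; ring
    have := congrArg Complex.re hsum
    simpa [Complex.add_re, Complex.mul_re, Complex.ofReal_re, Complex.ofReal_im,
      Complex.sub_re, Complex.neg_re, Complex.conj_re, mul_add] using this
  -- case analysis
  by_cases hy0 : y = 0
  · -- show z ≠ 0
    have hSc_unit : IsUnit Sc.det := by
      rw [hSc]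
      have : Sc.det = ((S.det : ℝ) : ℂ) := by
        rw [hSc]
        exact (RingHom.map_det Complex.ofRealHom S).symm
      rw [hSc] at this
      rw [this]
      simp [isUnit_iff_ne_zero, Complex.ofReal_ne_zero, ne_of_gt hS.det_pos]
    by_cases hz0 : z = 0
    · exfalso
      -- then Sc x = 0 so x = 0 and hence v = 0
      have hx0 : Sc *ᵥ x = 0 := by
        have := eq3
        rw [hz0] at this
        simpa using this.symm
      have : x = 0 := by
        have h2 : Sc⁻¹ *ᵥ (Sc *ᵥ x) = Sc⁻¹ *ᵥ 0 := by rw [hx0]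
        rwa [Matrix.mulVec_mulVec, Matrix.nonsing_inv_mul _ hSc_unit, Matrix.one_mulVec,
          Matrix.mulVec_zero] at h2
      apply hv0
      funext w
      rcases w with (w | w) | w
      · exact congrFun this w
      · have : w = 0 := Subsingleton.elim _ _
        rw [this]; exact hy0
      · exact congrFun hz0 w
    · have hZpos : 0 < Z := by
        rcases Function.ne_iff.mp hz0 with ⟨i, hi⟩
        refine Finset.sum_pos' (fun j _ => Complex.normSq_nonneg _) ⟨i, Finset.mem_univ i, ?_⟩
        exact Complex.normSq_pos.mpr hi
      have hlt : μ.re * (X + Z) < 0 := by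
        rw [main]
        have : -α * Z < 0 := mul_neg_of_neg_of_pos (by linarith) hZpos
        linarith
      have hpos : 0 < X + Z := by linarith
      nlinarith
  · -- y ≠ 0 : μ = -α
    have : μ = -(α : ℂ) := by
      have h0 : (μ + (α : ℂ)) * y = 0 := by linear_combination eq2
      rcases mul_eq_zero.mp h0 with h | h
      · linear_combination h
      · exact absurd h hy0
    rw [this]
    simpa using hα
end

section
/- Let H be a real Hilbert space and e ∈ H. Let A, R : ℝ≥0 → (H → H) be norm-continuous families of bounded linear operators with A(t)* e = 0 for all t ≥ 0 (A(t)* the Hilbert adjoint), and let P : ℝ≥0 → (H → H) be a differentiable (in operator norm) family of bounded linear operators satisfying the Riccati equation P'(t) = A(t) ∘ P(t) + P(t) ∘ A(t)* − P(t) ∘ R(t) ∘ P(t) for all t ≥ 0. If P(0) e = 0, then P(t) e = 0 for all t ≥ 0. (This is the invariance used in the mass-conservation proofs for the density filters: when e is the constant function 1, the filter covariance operator annihilates constants for all time.) -/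
open Set ContinuousLinearMap

/-- Invariance for the operator Riccati equation: if `A(t)* e = 0` for all `t`
and `P(0) e = 0`, then a solution of `P' = A P + P A* − P R P` satisfies
`P(t) e = 0` for all `t ≥ 0`. -/
theorem riccati_annihilates_constants
    {H : Type*} [NormedAddCommGroup H] [InnerProductSpace ℝ H] [CompleteSpace H]
    (e : H)
    (A R : ℝ → H →L[ℝ] H)
    (hAc : ContinuousOn A (Set.Ici 0)) (hRc : ContinuousOn R (Set.Ici 0))
    (hAe : ∀ t : ℝ, 0 ≤ t → ContinuousLinearMap.adjoint (A t) e = 0)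
    (P : ℝ → H →L[ℝ] H)
    (hP : ∀ t : ℝ, 0 ≤ t →
      HasDerivWithinAt P
        (A t ∘L P t + P t ∘L ContinuousLinearMap.adjoint (A t)
          - P t ∘L (R t ∘L P t)) (Set.Ici 0) t)
    (hP0 : P 0 e = 0) :
    ∀ t : ℝ, 0 ≤ t → P t e = 0 := by
  intro b hb
  -- continuity of P on Ici 0
  have hPc : ContinuousOn P (Set.Ici 0) := fun t ht =>
    (hP t ht).continuousWithinAt
  have hsub : Set.Icc (0:ℝ) b ⊆ Set.Ici 0 := Set.Icc_subset_Ici_self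
  -- bounds on norms over the compact interval
  obtain ⟨CA, hCA⟩ := (isCompact_Icc (a := (0:ℝ)) (b := b)).exists_bound_of_continuousOn
    (hAc.mono hsub)
  obtain ⟨CR, hCR⟩ := (isCompact_Icc (a := (0:ℝ)) (b := b)).exists_bound_of_continuousOn
    (hRc.mono hsub)
  obtain ⟨CP, hCP⟩ := (isCompact_Icc (a := (0:ℝ)) (b := b)).exists_bound_of_continuousOn
    (hPc.mono hsub)
  have h0b : (0:ℝ) ∈ Set.Icc 0 b := ⟨le_refl _, hb⟩
  have hCP0 : 0 ≤ CP := le_trans (norm_nonneg _) (hCP 0 h0b)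
  have hCR0 : 0 ≤ CR := le_trans (norm_nonneg _) (hCR 0 h0b)
  set K : ℝ := CA + CP * CR with hK
  -- the function y s = P s e
  set y : ℝ → H := fun s => P s e with hy
  have hyc : ContinuousOn y (Set.Icc 0 b) := by
    have : ContinuousOn (fun s => P s e) (Set.Icc 0 b) :=
      ((hPc.mono hsub)).clm_apply continuousOn_const
    exact this
  have hyd : ∀ s ∈ Set.Ico (0:ℝ) b, HasDerivWithinAt y
      (A s (y s) - P s (R s (y s))) (Set.Ici s) s := by
    intro s hs
    have hs0 : (0:ℝ) ≤ s := hs.1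
    have hd : HasDerivWithinAt P
        (A s ∘L P s + P s ∘L ContinuousLinearMap.adjoint (A s)
          - P s ∘L (R s ∘L P s)) (Set.Ici s) s :=
      (hP s hs0).mono (Set.Ici_subset_Ici.2 hs0)
    have hconst : HasDerivWithinAt (fun _ : ℝ => e) (0 : H) (Set.Ici s) s :=
      hasDerivWithinAt_const _ _ _
    have := hd.clm_apply hconst
    simp only [map_zero, add_zero] at this
    convert this using 1
    simp [ContinuousLinearMap.sub_apply, ContinuousLinearMap.add_apply,
      ContinuousLinearMap.comp_apply, hAe s hs0, y]
  have hbound : ∀ s ∈ Set.Ico (0:ℝ) b,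
      ‖A s (y s) - P s (R s (y s))‖ ≤ K * ‖y s‖ + 0 := by
    intro s hs
    have hsI : s ∈ Set.Icc (0:ℝ) b := ⟨hs.1, le_of_lt hs.2⟩
    have h1 : ‖A s (y s)‖ ≤ CA * ‖y s‖ :=
      le_trans ((A s).le_opNorm _) (by
        exact mul_le_mul_of_nonneg_right (hCA s hsI) (norm_nonneg _))
    have h2 : ‖P s (R s (y s))‖ ≤ CP * CR * ‖y s‖ := by
      calc ‖P s (R s (y s))‖ ≤ ‖P s‖ * ‖R s (y s)‖ := (P s).le_opNorm _
        _ ≤ ‖P s‖ * (‖R s‖ * ‖y s‖) :=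
            mul_le_mul_of_nonneg_left ((R s).le_opNorm _) (norm_nonneg _)
        _ ≤ CP * (CR * ‖y s‖) := by
            apply mul_le_mul (hCP s hsI)
            · exact mul_le_mul_of_nonneg_right (hCR s hsI) (norm_nonneg _)
            · positivity
            · exact hCP0
        _ = CP * CR * ‖y s‖ := by ring
    calc ‖A s (y s) - P s (R s (y s))‖ ≤ ‖A s (y s)‖ + ‖P s (R s (y s))‖ :=
          norm_sub_le _ _
      _ ≤ CA * ‖y s‖ + CP * CR * ‖y s‖ := add_le_add h1 h2
      _ = K * ‖y s‖ + 0 := by rw [hK]; ring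
  have hy0 : ‖y 0‖ ≤ 0 := by simp [y, hP0]
  have := norm_le_gronwallBound_of_norm_deriv_right_le hyc hyd hy0 hbound b
    ⟨hb, le_refl b⟩
  rw [gronwallBound_ε0_δ0] at this
  have : ‖y b‖ = 0 := le_antisymm this (norm_nonneg _)
  simpa [y] using norm_eq_zero.mp this
end

section
/- Let H be a real Hilbert space, e ∈ H, N ∈ ℕ, and θ ≥ 0. Let A : ℝ≥0 → (H → H) be a family of bounded linear operators with A(t)* e = 0 for all t ≥ 0. For each i ∈ Fin N, let P_i : ℝ≥0 → (H → H) be a family of bounded self-adjoint linear operators with P_i(t) e = 0 for all t, let S_i : ℝ≥0 → (H → H) be arbitrary bounded linear operators, let y_i : ℝ≥0 → H, and let N_i ⊆ Fin N be a neighbor set. Suppose p̂_i : ℝ≥0 → H are differentiable and satisfy, for all i and t ≥ 0, p̂_i'(t) = A(t) p̂_i(t) + P_i(t) S_i(t) (y_i(t) − p̂_i(t)) + θ P_i(t) Σ_{j ∈ N_i} (p̂_j(t) − p̂_i(t)). If ⟪p̂_i(0), e⟫ = 1 for all i, then ⟪p̂_i(t), e⟫ = 1 for all i and all t ≥ 0.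 (Mass conservation of the distributed density filter; the centralized filter is the special case N = 1, θ = 0: when e is the constant function 1, each agent's density estimate keeps unit total mass.) -/
open Set

/-- Mass conservation of the distributed density filter: if the Fokker–Planck
operator satisfies `A(t)* e = 0`, each local covariance operator `P_i(t)` is
self-adjoint and annihilates `e`, and each local estimate starts with unit mass
`⟪p̂_i(0), e⟫ = 1`, then every local estimate keeps unit mass for all time. -/
theorem distributed_density_filter_mass_conservation
    {H : Type*} [NormedAddCommGroup H] [InnerProductSpace ℝ H] [CompleteSpace H]
    (e : H) (N : ℕ) (θ : ℝ) (hθ : 0 ≤ θ)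
    (A : ℝ → H →L[ℝ] H)
    (hAe : ∀ t : ℝ, 0 ≤ t → ContinuousLinearMap.adjoint (A t) e = 0)
    (P : Fin N → ℝ → H →L[ℝ] H)
    (hPsa : ∀ i : Fin N, ∀ t : ℝ, 0 ≤ t → IsSelfAdjoint (P i t))
    (hPe : ∀ i : Fin N, ∀ t : ℝ, 0 ≤ t → P i t e = 0)
    (S : Fin N → ℝ → H →L[ℝ] H)
    (y : Fin N → ℝ → H)
    (nbr : Fin N → Finset (Fin N))
    (phat : Fin N → ℝ → H)
    (hphat : ∀ i : Fin N, ∀ t : ℝ, 0 ≤ t →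
      HasDerivWithinAt (phat i)
        (A t (phat i t) + P i t (S i t (y i t - phat i t))
          + θ • P i t (∑ j ∈ nbr i, (phat j t - phat i t))) (Set.Ici 0) t)
    (hinit : ∀ i : Fin N, inner ℝ (phat i 0) e = (1 : ℝ)) :
    ∀ i : Fin N, ∀ t : ℝ, 0 ≤ t → inner ℝ (phat i t) e = (1 : ℝ) := by

  intro i t ht
  -- the mass function
  set g : ℝ → ℝ := fun s => inner ℝ (phat i s) e with hg
  have key : ∀ s : ℝ, 0 ≤ s → HasDerivWithinAt g 0 (Set.Ici 0) s := by
    intro s hs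
    have hd := (hphat i s hs).inner (𝕜 := ℝ) (hasDerivWithinAt_const s (Set.Ici 0) e)
    have h1 : inner ℝ (A s (phat i s)) e = (0 : ℝ) := by
      rw [← ContinuousLinearMap.adjoint_inner_right, hAe s hs, inner_zero_right]
    have h2 : inner ℝ (P i s (S i s (y i s - phat i s))) e = (0 : ℝ) := by
      rw [← ContinuousLinearMap.adjoint_inner_right, (hPsa i s hs).adjoint_eq,
        hPe i s hs, inner_zero_right]
    have h3 : inner ℝ (P i s (∑ j ∈ nbr i, (phat j s - phat i s))) e = (0 : ℝ) := by
      rw [← ContinuousLinearMap.adjoint_inner_right, (hPsa i s hs).adjoint_eq,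
        hPe i s hs, inner_zero_right]
    have : (inner ℝ (phat i s) (0 : H)
        + inner ℝ (A s (phat i s) + P i s (S i s (y i s - phat i s))
          + θ • P i s (∑ j ∈ nbr i, (phat j s - phat i s))) e : ℝ) = 0 := by
      rw [inner_add_left, inner_add_left, inner_smul_left, h1, h2, h3, inner_zero_right]
      simp
    rw [this] at hd
    exact hd
  have hconst : ∀ x ∈ Set.Icc (0:ℝ) t, g x = g 0 := by
    apply constant_of_has_deriv_right_zero
    · intro x hx
      exact ((key x hx.1).continuousWithinAt).mono (fun z hz => hz.1)
    · intro x hx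
      exact (key x hx.1).mono (Set.Ici_subset_Ici.2 hx.1)
  have h := hconst t ⟨ht, le_refl t⟩
  rw [show (inner ℝ (phat i t) e : ℝ) = g t from rfl, h]
  exact hinit i
end
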